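/- arXiv:2106.15682 — 6 statements merged into one kernel-verified Lean document; each statement's English description precedes it below -/
import Mathlib

section
/- Let X ∈ ℝ^{n×p} with rank(X) = p < n, let w ∈ ℝⁿ, and let X̃ = (X, w) ∈ ℝ^{n×(p+1)} satisfy rank(X̃) = p + 1. Let B ∈ ℝ^{p×p} be symmetric positive definite, let a ∈ ℝᵖ and b ∈ ℝ, and let B̃ ∈ ℝ^{(p+1)×(p+1)} be the block matrix with top-left block B, last column (a; b²) and last row (aᵀ, b²). If B̃ is positive semidefinite, then tr((X̃ᵀX̃)^{-1} B̃) ≥ tr((XᵀX)^{-1} B). If moreover B̃ is positive definite, the inequality is strict. -/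
/-!
Let `β = (XᵀX)⁻¹Xᵀw` and `r = w - Xβ` be the coefficients and the residual of the least-squares
regression of `w` on the columns of `X`, and `v = (-β, 1)`, so that `X̃v = r`. The normal
equations `Xᵀr = 0` give `(X̃ᵀX̃)⁻¹ = E(XᵀX)⁻¹Eᵀ + (rᵀr)⁻¹vvᵀ`, where `E` includes `ℝᵖ` as the first
`p` coordinates of `ℝᵖ⁺¹`. Since `EᵀB̃E = B`, this yields
`tr((X̃ᵀX̃)⁻¹B̃) = tr((XᵀX)⁻¹B) + vᵀB̃v / rᵀr`. Full column rank of `X̃` makes `r ≠ 0`, and the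
last term is nonnegative, resp. positive, when `B̃` is positive semidefinite, resp. definite.
-/

open Matrix

namespace Matrix

theorem mulVec_injective_of_rank_eq_card {m ι K : Type*} [Fintype ι] [Field K]
    (X : Matrix m ι K) (h : X.rank = Fintype.card ι) : Function.Injective X.mulVec := by
  have hker : Module.finrank K (LinearMap.ker X.mulVecLin) = 0 := by
    have := LinearMap.finrank_range_add_finrank_ker X.mulVecLin
    rw [← rank, h, Module.finrank_fintype_fun_eq_card] at this
    omega
  exact LinearMap.ker_eq_bot.mp (Submodule.finrank_eq_zero.mp hker)

section AppendCol

variable {m R : Type*} {p : ℕ} (X : Matrix m (Fin p) R) (w : m → R)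

def appendCol : Matrix m (Fin (p + 1)) R := of fun i => Fin.snoc (X i) (w i)

variable [CommSemiring R]

theorem appendCol_mulVec_snoc (x : Fin p → R) (c : R) :
    appendCol X w *ᵥ Fin.snoc x c = X *ᵥ x + c • w := by
  ext i
  simp [appendCol, mulVec, dotProduct, Fin.sum_univ_castSucc, mul_comm]

theorem transpose_appendCol_mulVec [Fintype m] (y : m → R) :
    (appendCol X w)ᵀ *ᵥ y = Fin.snoc (Xᵀ *ᵥ y) (w ⬝ᵥ y) := by
  ext j
  induction j using Fin.lastCases <;> simp [appendCol, mulVec, dotProduct]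

theorem mul_appendCol [Fintype m] {l : Type*} (N : Matrix l m R) :
    N * appendCol X w = appendCol (N * X) (N *ᵥ w) := by
  ext i j
  induction j using Fin.lastCases <;> simp [appendCol, mul_apply, mulVec, dotProduct]

theorem appendCol_mul_submatrix_one :
    appendCol X w * (1 : Matrix (Fin (p + 1)) (Fin (p + 1)) R).submatrix id Fin.castSucc = X :=
  (mul_submatrix_one (Equiv.refl _) Fin.castSucc _).trans <| by ext; simp [appendCol]

end AppendCol

section LeastSquares

variable {m ι K : Type*} [Fintype m] [Fintype ι] [DecidableEq ι] [Field K]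
  (X : Matrix m ι K) (w : m → K)

noncomputable def lstsqCoeffs : ι → K := (Xᵀ * X)⁻¹ *ᵥ (Xᵀ *ᵥ w)

noncomputable def lstsqResidual : m → K := w - X *ᵥ lstsqCoeffs X w

variable {X}

theorem transpose_mulVec_lstsqResidual (hX : IsUnit (Xᵀ * X).det) :
    Xᵀ *ᵥ lstsqResidual X w = 0 := by
  rw [lstsqResidual, lstsqCoeffs, mulVec_sub, mulVec_mulVec, mulVec_mulVec,
    mul_nonsing_inv _ hX, Matrix.one_mulVec, sub_self]

theorem lstsqResidual_dotProduct_self (hX : IsUnit (Xᵀ * X).det) :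
    lstsqResidual X w ⬝ᵥ lstsqResidual X w = w ⬝ᵥ lstsqResidual X w := by
  nth_rw 1 [lstsqResidual]
  rw [sub_dotProduct, dotProduct_comm (X *ᵥ _), dotProduct_mulVec, ← mulVec_transpose,
    transpose_mulVec_lstsqResidual w hX, zero_dotProduct, sub_zero]

end LeastSquares

section AppendColLeastSquares

variable {m K : Type*} [Fintype m] [Field K] {p : ℕ} (X : Matrix m (Fin p) K) (w : m → K)

noncomputable def residualCoeffs : Fin (p + 1) → K := Fin.snoc (-lstsqCoeffs X w) 1

theorem residualCoeffs_ne_zero : residualCoeffs X w ≠ 0 := fun h => by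
  simpa [residualCoeffs] using congrFun h (Fin.last p)

theorem appendCol_mulVec_residualCoeffs :
    appendCol X w *ᵥ residualCoeffs X w = lstsqResidual X w := by
  rw [residualCoeffs, appendCol_mulVec_snoc, one_smul, mulVec_neg, neg_add_eq_sub, lstsqResidual]

variable {X}

theorem lstsqResidual_ne_zero (h : Function.Injective (appendCol X w).mulVec) :
    lstsqResidual X w ≠ 0 := by
  rw [← appendCol_mulVec_residualCoeffs, ← mulVec_zero (appendCol X w), h.ne_iff]
  exact residualCoeffs_ne_zero X w

theorem transpose_appendCol_mulVec_lstsqResidual (hX : IsUnit (Xᵀ * X).det) :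
    (appendCol X w)ᵀ *ᵥ lstsqResidual X w =
      Fin.snoc 0 (lstsqResidual X w ⬝ᵥ lstsqResidual X w) := by
  rw [transpose_appendCol_mulVec, transpose_mulVec_lstsqResidual w hX,
    lstsqResidual_dotProduct_self w hX]

theorem inv_transpose_mul_self_appendCol (hX : IsUnit (Xᵀ * X).det)
    (hr : lstsqResidual X w ⬝ᵥ lstsqResidual X w ≠ 0) :
    ((appendCol X w)ᵀ * appendCol X w)⁻¹ =
      (1 : Matrix (Fin (p + 1)) (Fin (p + 1)) K).submatrix id Fin.castSucc * (Xᵀ * X)⁻¹ *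
          ((1 : Matrix (Fin (p + 1)) (Fin (p + 1)) K).submatrix id Fin.castSucc)ᵀ +
        (lstsqResidual X w ⬝ᵥ lstsqResidual X w)⁻¹ •
          vecMulVec (residualCoeffs X w) (residualCoeffs X w) := by
  set E := (1 : Matrix (Fin (p + 1)) (Fin (p + 1)) K).submatrix id Fin.castSucc
  set s := lstsqResidual X w ⬝ᵥ lstsqResidual X w
  have hE : E * (Xᵀ * X)⁻¹ * Eᵀ * ((appendCol X w)ᵀ * appendCol X w) =
      E * appendCol 1 (lstsqCoeffs X w) := by
    rw [← Matrix.mul_assoc, Matrix.mul_assoc _ Eᵀ, ← transpose_mul, appendCol_mul_submatrix_one,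
      Matrix.mul_assoc E, Matrix.mul_assoc, mul_appendCol, Matrix.mul_assoc,
      nonsing_inv_mul _ hX, lstsqCoeffs, mulVec_mulVec]
  have hv : vecMulVec (residualCoeffs X w) (residualCoeffs X w) *
      ((appendCol X w)ᵀ * appendCol X w) = vecMulVec (residualCoeffs X w) (Fin.snoc 0 s) := by
    rw [vecMulVec_mul, ← vecMul_vecMul, vecMul_transpose, appendCol_mulVec_residualCoeffs,
      ← mulVec_transpose, transpose_appendCol_mulVec_lstsqResidual w hX]
  apply inv_eq_left_inv
  rw [Matrix.add_mul, hE, Matrix.smul_mul, hv]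
  ext i j
  induction i using Fin.lastCases <;> induction j using Fin.lastCases <;>
    simp [E, residualCoeffs, appendCol, mul_apply, one_apply, vecMulVec_apply, hr,
      eq_comm (a := Fin.last p)]
  field_simp
  ring

theorem trace_inv_transpose_mul_self_appendCol_mul (hX : IsUnit (Xᵀ * X).det)
    (hr : lstsqResidual X w ⬝ᵥ lstsqResidual X w ≠ 0) (M : Matrix (Fin (p + 1)) (Fin (p + 1)) K) :
    (((appendCol X w)ᵀ * appendCol X w)⁻¹ * M).trace =
      ((Xᵀ * X)⁻¹ * M.submatrix Fin.castSucc Fin.castSucc).trace +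
        (lstsqResidual X w ⬝ᵥ lstsqResidual X w)⁻¹ *
          (residualCoeffs X w ⬝ᵥ (M *ᵥ residualCoeffs X w)) := by
  have hE : ((1 : Matrix (Fin (p + 1)) (Fin (p + 1)) K).submatrix id Fin.castSucc)ᵀ * M *
      (1 : Matrix (Fin (p + 1)) (Fin (p + 1)) K).submatrix id Fin.castSucc =
        M.submatrix Fin.castSucc Fin.castSucc := by
    ext i j
    simp [mul_apply, one_apply]
  rw [inv_transpose_mul_self_appendCol w hX hr, Matrix.add_mul, trace_add, Matrix.smul_mul,
    trace_smul, vecMulVec_mul, trace_vecMulVec, smul_eq_mul, dotProduct_mulVec _ M,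
    dotProduct_comm (_ ᵥ* M), Matrix.mul_assoc, Matrix.mul_assoc, trace_mul_comm,
    Matrix.mul_assoc, hE]

end AppendColLeastSquares

end Matrix

theorem trace_inv_mul_le_of_append_col_general
    {n p : ℕ}
    (X : Matrix (Fin n) (Fin p) ℝ) (hXrank : X.rank = p)
    (w : Fin n → ℝ)
    (Xt : Matrix (Fin n) (Fin (p + 1)) ℝ)
    (hXt : ∀ i j, Xt i j = Fin.lastCases (w i) (fun j' => X i j') j)
    (hXtrank : Xt.rank = p + 1)
    (B : Matrix (Fin p) (Fin p) ℝ)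
    (a : Fin p → ℝ) (b : ℝ)
    (Bt : Matrix (Fin (p + 1)) (Fin (p + 1)) ℝ)
    (hBt : ∀ i j, Bt i j =
      Fin.lastCases
        (Fin.lastCases (b ^ 2) (fun j' => a j') j)
        (fun i' => Fin.lastCases (a i') (fun j' => B i' j') j) i)
    (hBtpsd : Bt.PosSemidef) :
    ((Xᵀ * X)⁻¹ * B).trace ≤ ((Xtᵀ * Xt)⁻¹ * Bt).trace ∧
      (Bt.PosDef → ((Xᵀ * X)⁻¹ * B).trace < ((Xtᵀ * Xt)⁻¹ * Bt).trace) := by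
  obtain rfl : Xt = appendCol X w := by
    ext i j
    induction j using Fin.lastCases <;> simp [hXt, appendCol]
  have hB : Bt.submatrix Fin.castSucc Fin.castSucc = B := by
    ext i j
    simp [hBt]
  have hX : IsUnit (Xᵀ * X).det := by
    have hinj := X.mulVec_injective_of_rank_eq_card (by simpa using hXrank)
    simpa using (PosDef.conjTranspose_mul_self X hinj).det_pos.ne'.isUnit
  have hr : 0 < lstsqResidual X w ⬝ᵥ lstsqResidual X w := by
    have hinj := (appendCol X w).mulVec_injective_of_rank_eq_card (by simpa using hXtrank)
    simpa using dotProduct_star_self_pos_iff.mpr (lstsqResidual_ne_zero w hinj)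
  rw [trace_inv_transpose_mul_self_appendCol_mul w hX hr.ne', hB]
  refine ⟨le_add_of_nonneg_right (mul_nonneg (inv_nonneg.2 hr.le) ?_),
    fun hBtpd => lt_add_of_pos_right _ (mul_pos (inv_pos.2 hr) ?_)⟩
  · simpa using hBtpsd.dotProduct_mulVec_nonneg (residualCoeffs X w)
  · simpa using hBtpd.dotProduct_mulVec_pos (residualCoeffs_ne_zero X w)

/-- Appending a column to a full-column-rank matrix and a compatible
row/column to a positive (semi)definite matrix can only increase the trace
`tr((XᵀX)⁻¹ B)`; strictly so when the extended matrix is positive definite. -/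
theorem trace_inv_mul_le_of_append_col
    {n p : ℕ} (hpn : p < n)
    (X : Matrix (Fin n) (Fin p) ℝ) (hXrank : X.rank = p)
    (w : Fin n → ℝ)
    (Xt : Matrix (Fin n) (Fin (p + 1)) ℝ)
    (hXt : ∀ i j, Xt i j = Fin.lastCases (w i) (fun j' => X i j') j)
    (hXtrank : Xt.rank = p + 1)
    (B : Matrix (Fin p) (Fin p) ℝ) (hBsymm : B.IsSymm) (hBpd : B.PosDef)
    (a : Fin p → ℝ) (b : ℝ)
    (Bt : Matrix (Fin (p + 1)) (Fin (p + 1)) ℝ)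
    (hBt : ∀ i j, Bt i j =
      Fin.lastCases
        (Fin.lastCases (b ^ 2) (fun j' => a j') j)
        (fun i' => Fin.lastCases (a i') (fun j' => B i' j') j) i)
    (hBtpsd : Bt.PosSemidef) :
    ((Xᵀ * X)⁻¹ * B).trace ≤ ((Xtᵀ * Xt)⁻¹ * Bt).trace ∧
      (Bt.PosDef → ((Xᵀ * X)⁻¹ * B).trace < ((Xtᵀ * Xt)⁻¹ * Bt).trace) :=
  trace_inv_mul_le_of_append_col_general X hXrank w Xt hXt hXtrank B a b Bt hBt hBtpsd
end

section
/- Let S₁ ⊊ S₂ ⊆ {1,…,d} with |S₂| ≤ n, suppose the submatrix X_{S₂} has full column rank, and suppose Σ_{S₂} is positive definite. Then df_R(S₁) < df_R(S₂). -/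
/-!
Write `A = X_{S₂}ᵀ X_{S₂}` and let `F` select the columns of `S₁` inside `S₂`, so that the
`S₁`-quantities are `Fᵀ A F` and `Fᵀ Σ F`. The matrix `G = F (Fᵀ A F)⁻¹ Fᵀ` satisfies
`G A G = G`, hence `A⁻¹ - G = (A⁻¹ - G) A (A⁻¹ - G) ⪰ 0`. Pairing with `Σ ⪰ 0` gives
`tr((Fᵀ A F)⁻¹ Fᵀ Σ F) = tr(G Σ) ≤ tr(A⁻¹ Σ)`, so the trace term does not decrease from `S₁` to
`S₂`, while `|S|/2` strictly increases.
-/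

open Matrix

variable {n d : ℕ}

/-- The submatrix of `X` consisting of the columns indexed by `S`. -/
noncomputable def colSub (X : Matrix (Fin n) (Fin d) ℝ) (S : Finset (Fin d)) :
    Matrix (Fin n) {j // j ∈ S} ℝ :=
  Matrix.of fun i j => X i j.val

/-- The principal submatrix of `A` on the index set `S`. -/
noncomputable def prinSub (A : Matrix (Fin d) (Fin d) ℝ) (S : Finset (Fin d)) :
    Matrix {j // j ∈ S} {j // j ∈ S} ℝ :=
  Matrix.of fun i j => A i.val j.val

/-- The predictive model degrees of freedom of the ordinary least squares model on the
variable subset `S`: `df_R(S) = |S|/2 + (n/2)·tr((X_Sᵀ X_S)⁻¹ Σ_S)`. -/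
noncomputable def dfR (X : Matrix (Fin n) (Fin d) ℝ) (Sig : Matrix (Fin d) (Fin d) ℝ)
    (S : Finset (Fin d)) : ℝ :=
  (S.card : ℝ) / 2 +
    ((n : ℝ) / 2) * (((colSub X S)ᵀ * colSub X S)⁻¹ * prinSub Sig S).trace

namespace Matrix

open scoped ComplexOrder

variable {ι κ 𝕜 : Type*} [Fintype ι]

theorem mulVec_injective_of_rank_eq_card_s1 {K : Type*} [Field K] {A : Matrix κ ι K}
    (h : A.rank = Fintype.card ι) : Function.Injective A.mulVec := by
  have hdim := LinearMap.finrank_range_add_finrank_ker A.mulVecLin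
  rw [Module.finrank_fintype_fun_eq_card, ← rank, h] at hdim
  have hker : LinearMap.ker A.mulVecLin = ⊥ := Submodule.finrank_eq_zero.mp (by omega)
  exact LinearMap.ker_eq_bot.mp hker

variable [RCLike 𝕜]

open scoped MatrixOrder in
theorem PosSemidef.trace_mul_nonneg {A B : Matrix ι ι 𝕜} (hA : A.PosSemidef)
    (hB : B.PosSemidef) : 0 ≤ (A * B).trace := by
  classical
  obtain ⟨C, rfl⟩ := CStarAlgebra.nonneg_iff_eq_star_mul_self.mp hB.nonneg
  rw [star_eq_conjTranspose, ← Matrix.mul_assoc, trace_mul_comm, ← Matrix.mul_assoc]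
  exact (hA.mul_mul_conjTranspose_same C).trace_nonneg

theorem PosDef.posSemidef_inv_sub_mul_inv_mul [Fintype κ] [DecidableEq ι] [DecidableEq κ]
    {A : Matrix ι ι 𝕜} (hA : A.PosDef) {F : Matrix ι κ 𝕜} (hF : IsUnit (Fᴴ * A * F).det) :
    (A⁻¹ - F * (Fᴴ * A * F)⁻¹ * Fᴴ).PosSemidef := by
  set M := Fᴴ * A * F
  set G := F * M⁻¹ * Fᴴ
  have hAdet : IsUnit A.det := hA.isUnit.map detMonoidHom
  have hGAG : G * A * G = G :=
    calc G * A * G = F * (M⁻¹ * M) * M⁻¹ * Fᴴ := by simp only [G, M, Matrix.mul_assoc]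
      _ = G := by rw [nonsing_inv_mul _ hF, Matrix.mul_one]
  have hG : G.IsHermitian :=
    isHermitian_mul_mul_conjTranspose F (isHermitian_conjTranspose_mul_mul F hA.isHermitian).inv
  have hH : (A⁻¹ - G).IsHermitian := hA.isHermitian.inv.sub hG
  have hsandwich : A⁻¹ - G = (A⁻¹ - G)ᴴ * A * (A⁻¹ - G) := by
    rw [hH.eq]
    simp only [sub_mul, mul_sub, nonsing_inv_mul _ hAdet, Matrix.one_mul,
      mul_nonsing_inv_cancel_right _ _ hAdet, hGAG]
    abel
  rw [hsandwich]
  exact hA.posSemidef.conjTranspose_mul_mul_same _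

theorem conjTranspose_one_submatrix_mul_mul [DecidableEq ι] (M : Matrix ι ι 𝕜) (e : κ → ι) :
    ((1 : Matrix ι ι 𝕜).submatrix id e)ᴴ * M * (1 : Matrix ι ι 𝕜).submatrix id e =
      M.submatrix e e := by
  ext i j
  simp [mul_apply, one_apply]

theorem PosDef.trace_inv_submatrix_mul_submatrix_le [Fintype κ] [DecidableEq ι] [DecidableEq κ]
    {A S : Matrix ι ι 𝕜} (hA : A.PosDef) (hS : S.PosSemidef) {e : κ → ι}
    (he : Function.Injective e) :
    ((A.submatrix e e)⁻¹ * S.submatrix e e).trace ≤ (A⁻¹ * S).trace := by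
  set F := (1 : Matrix ι ι 𝕜).submatrix id e
  have hF : IsUnit (Fᴴ * A * F).det := by
    rw [conjTranspose_one_submatrix_mul_mul]
    exact (hA.submatrix he).isUnit.map detMonoidHom
  have hloewner := hA.posSemidef_inv_sub_mul_inv_mul hF
  rw [conjTranspose_one_submatrix_mul_mul] at hloewner
  have hcyc : ((A.submatrix e e)⁻¹ * (Fᴴ * S * F)).trace =
      (F * (A.submatrix e e)⁻¹ * Fᴴ * S).trace := by
    rw [show (A.submatrix e e)⁻¹ * (Fᴴ * S * F) = ((A.submatrix e e)⁻¹ * Fᴴ * S) * F by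
      simp only [Matrix.mul_assoc], trace_mul_comm]
    simp only [Matrix.mul_assoc]
  rw [← conjTranspose_one_submatrix_mul_mul S e, hcyc, ← sub_nonneg, ← trace_sub, ← sub_mul]
  exact hloewner.trace_mul_nonneg hS

end Matrix

theorem dfR_strictMono_of_ssubset_general
    (X : Matrix (Fin n) (Fin d) ℝ) (Sig : Matrix (Fin d) (Fin d) ℝ)
    (S₁ S₂ : Finset (Fin d)) (hsub : S₁ ⊂ S₂)
    (hrank : (colSub X S₂).rank = S₂.card)
    (hpd : (prinSub Sig S₂).PosDef) :
    dfR X Sig S₁ < dfR X Sig S₂ := by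
  set e : {j // j ∈ S₁} → {j // j ∈ S₂} := Subtype.map id fun _ ↦ (hsub.subset ·)
  have hgram : ((colSub X S₂)ᵀ * colSub X S₂).PosDef := by
    rw [← conjTranspose_eq_transpose_of_trivial]
    exact .conjTranspose_mul_self _ (mulVec_injective_of_rank_eq_card_s1 (by rwa [Fintype.card_coe]))
  have hgram_sub : (colSub X S₁)ᵀ * colSub X S₁ =
      ((colSub X S₂)ᵀ * colSub X S₂).submatrix e e := by
    rw [submatrix_mul _ _ _ _ _ Function.bijective_id]
    rfl
  have htrace : (((colSub X S₁)ᵀ * colSub X S₁)⁻¹ * prinSub Sig S₁).trace ≤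
      (((colSub X S₂)ᵀ * colSub X S₂)⁻¹ * prinSub Sig S₂).trace := by
    rw [hgram_sub]
    exact hgram.trace_inv_submatrix_mul_submatrix_le hpd.posSemidef
      (Subtype.map_injective _ Function.injective_id)
  have hcard : (S₁.card : ℝ) < S₂.card := by exact_mod_cast Finset.card_lt_card hsub
  unfold dfR
  exact add_lt_add_of_lt_of_le (by linarith) (mul_le_mul_of_nonneg_left htrace (by positivity))

/-- For nested subsets `S₁ ⊊ S₂` with `|S₂| ≤ n`, full column rank
`X_{S₂}` and positive definite `Σ_{S₂}`, the predictive model degrees of freedom is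
strictly increasing: `df_R(S₁) < df_R(S₂)`. -/
theorem dfR_strictMono_of_ssubset
    (X : Matrix (Fin n) (Fin d) ℝ) (Sig : Matrix (Fin d) (Fin d) ℝ)
    (hSig : Sig.PosSemidef)
    (S₁ S₂ : Finset (Fin d)) (hsub : S₁ ⊂ S₂) (hcard : S₂.card ≤ n)
    (hrank : (colSub X S₂).rank = S₂.card)
    (hpd : (prinSub Sig S₂).PosDef) :
    dfR X Sig S₁ < dfR X Sig S₂ :=
  dfR_strictMono_of_ssubset_general X Sig S₁ S₂ hsub hrank hpd
end

section
/- Let S₁ ⊆ {1,…,d} with |S₁| < n, let j ∈ {1,…,d}∖S₁ and S₂ = S₁ ∪ {j}. Write the principal submatrix of Σ on S₂ in block form with diagonal blocks Σ_{S₁} and σ_j², and off-diagonal block Σ_{S₁,j}. Assume X_{S₂} has full column rank and Σ_{S₂} is positive definite. Define ζ = (x_{(j)} − X_{S₁} Σ_{S₁}^{-1} Σ_{S₁,j}) / √(σ_j² − Σ_{S₁,j}ᵀ Σ_{S₁}^{-1} Σ_{S₁,j}), where x_{(j)} is the j-th column of X, and set C = X_{S₁}(X_{S₁}ᵀX_{S₁})^{-1}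 Σ_{S₁} (X_{S₁}ᵀX_{S₁})^{-1} X_{S₁}ᵀ and H = X_{S₁}(X_{S₁}ᵀX_{S₁})^{-1} X_{S₁}ᵀ. Then df_R(S₂) − df_R(S₁) = 1/2 + (n/2)·(ζᵀ C ζ + 1)/(ζᵀ(Iₙ − H)ζ). -/
open Matrix


set_option linter.unusedSectionVars false
section Helpers
variable {p q N : Type*} [Fintype p] [DecidableEq p] [Fintype q] [DecidableEq q]
  [Fintype N] [DecidableEq N]

lemma myTrace_submatrix_equiv {R : Type*} [AddCommMonoid R] (M : Matrix q q R) (e : p ≃ q) :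
    (M.submatrix e e).trace = M.trace :=
  Fintype.sum_equiv e _ _ fun _ => rfl

lemma myDot_comp_equiv (e : p ≃ q) (x y : q → ℝ) : (x ∘ e) ⬝ᵥ (y ∘ e) = x ⬝ᵥ y :=
  Fintype.sum_equiv e _ _ fun _ => rfl

lemma myPosDef_submatrix_equiv {M : Matrix q q ℝ} (hM : M.PosDef) (e : p ≃ q) :
    (M.submatrix e e).PosDef := by
  refine PosDef.of_dotProduct_mulVec_pos (hM.1.submatrix e) fun x hx => ?_
  have hx' : x ∘ e.symm ≠ 0 := by
    intro h; apply hx; funext i; simpa using congrFun h (e i)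
  have h2 := hM.dotProduct_mulVec_pos hx'
  have hxe : x = (x ∘ e.symm) ∘ e := by funext i; simp
  have key : star x ⬝ᵥ (M.submatrix e e *ᵥ x) = star (x ∘ e.symm) ⬝ᵥ (M *ᵥ (x ∘ e.symm)) := by
    calc star x ⬝ᵥ (M.submatrix e e *ᵥ x)
        = ((x ∘ e.symm) ∘ e) ⬝ᵥ (((M *ᵥ (x ∘ e.symm))) ∘ e) := by
          rw [star_trivial]
          nth_rewrite 1 [hxe]
          congr 1
          rw [submatrix_mulVec_equiv]
      _ = (x ∘ e.symm) ⬝ᵥ (M *ᵥ (x ∘ e.symm)) := myDot_comp_equiv e _ _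
      _ = star (x ∘ e.symm) ⬝ᵥ (M *ᵥ (x ∘ e.symm)) := by rw [star_trivial]
  rw [key]; exact h2

lemma myPosDef_blocks₁₁ {A : Matrix p p ℝ} {B : Matrix p q ℝ} {C : Matrix q p ℝ}
    {D : Matrix q q ℝ} (h : (fromBlocks A B C D).PosDef) : A.PosDef := by
  refine PosDef.of_dotProduct_mulVec_pos ?_ fun x hx => ?_
  · have h1 := h.1
    rw [isHermitian_fromBlocks_iff] at h1
    exact h1.1
  · have hnz : (Sum.elim x (0 : q → ℝ)) ≠ 0 := fun h0 => hx (funext fun i => congrFun h0 (Sum.inl i))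
    have h2 := h.dotProduct_mulVec_pos hnz
    simpa [fromBlocks_mulVec, sumElim_dotProduct_sumElim] using h2

lemma myGram_posDef {M : Matrix N q ℝ} (h : M.rank = Fintype.card q) : (Mᵀ * M).PosDef := by
  refine PosDef.of_dotProduct_mulVec_pos (by simpa using isHermitian_conjTranspose_mul_self M) fun x hx => ?_
  have hker : ∀ v, M *ᵥ v = 0 → v = 0 := by
    have h1 := LinearMap.finrank_range_add_finrank_ker M.mulVecLin
    rw [Module.finrank_fintype_fun_eq_card] at h1
    have h2 : Module.finrank ℝ (LinearMap.ker M.mulVecLin) = 0 := by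
      have : M.rank = Module.finrank ℝ (LinearMap.range M.mulVecLin) := rfl
      omega
    have h3 : LinearMap.ker M.mulVecLin = ⊥ := Submodule.finrank_eq_zero.mp h2
    intro v hv
    exact LinearMap.ker_eq_bot'.mp h3 v (by simpa [Matrix.mulVecLin_apply] using hv)
  have hMx : M *ᵥ x ≠ 0 := fun h0 => hx (hker x h0)
  have key : x ⬝ᵥ ((Mᵀ * M) *ᵥ x) = (M *ᵥ x) ⬝ᵥ (M *ᵥ x) := by
    rw [← mulVec_mulVec, dotProduct_mulVec, vecMul_transpose]
  rw [star_trivial, key]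
  have hnn : 0 ≤ (M *ᵥ x) ⬝ᵥ (M *ᵥ x) := Finset.sum_nonneg fun i _ => mul_self_nonneg _
  exact lt_of_le_of_ne hnn (fun hz => hMx (dotProduct_self_eq_zero.mp hz.symm))

lemma myTrace_fromBlocks {R : Type*} [AddCommMonoid R] (A : Matrix p p R) (B : Matrix p q R)
    (C : Matrix q p R) (D : Matrix q q R) :
    (fromBlocks A B C D).trace = A.trace + D.trace := by
  simp [Matrix.trace, Fintype.sum_sum_type, fromBlocks]

lemma myTrace_col_mul_row (w v : p → ℝ) :
    (replicateCol Unit w * replicateRow Unit v).trace = w ⬝ᵥ v := by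
  simp [Matrix.trace, Matrix.mul_apply, dotProduct, Matrix.diag]

end Helpers
open Matrix

set_option linter.unusedSectionVars false
set_option maxHeartbeats 1000000

section Core
variable {p : Type*} [Fintype p] [DecidableEq p]

lemma myOfConst (t : ℝ) : (Matrix.of fun _ _ => t : Matrix Unit Unit ℝ) = t • 1 := by
  ext i j
  simp [Matrix.one_apply, Subsingleton.elim i j]

lemma myBlock_inv_trace (A : Matrix p p ℝ) (b : p → ℝ) (c : ℝ) (Sg : Matrix p p ℝ)
    (σ : p → ℝ) (cjj : ℝ) (hA : IsUnit A.det) (hAs : Aᵀ = A)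
    (hs : c - b ⬝ᵥ (A⁻¹ *ᵥ b) ≠ 0) :
    ((fromBlocks A (replicateCol Unit b) (replicateRow Unit b) (Matrix.of fun _ _ => c))⁻¹ *
      fromBlocks Sg (replicateCol Unit σ) (replicateRow Unit σ) (Matrix.of fun _ _ => cjj)).trace =
      (A⁻¹ * Sg).trace +
        ((A⁻¹ *ᵥ b) ⬝ᵥ (Sg *ᵥ (A⁻¹ *ᵥ b)) - 2 * ((A⁻¹ *ᵥ b) ⬝ᵥ σ) + cjj) /
          (c - b ⬝ᵥ (A⁻¹ *ᵥ b)) := by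
  set w := A⁻¹ *ᵥ b with hw
  set s := c - b ⬝ᵥ w with hsdef
  have hAinvs : (A⁻¹)ᵀ = A⁻¹ := by rw [transpose_nonsing_inv, hAs]
  have hAw : A *ᵥ w = b := by rw [hw, mulVec_mulVec, mul_nonsing_inv _ hA, one_mulVec]
  have hbAinv : b ᵥ* A⁻¹ = w := by rw [← hAinvs, vecMul_transpose]
  set Gi := fromBlocks (A⁻¹ + s⁻¹ • (replicateCol Unit w * replicateRow Unit w)) ((-s⁻¹) • replicateCol Unit w)
      ((-s⁻¹) • replicateRow Unit w) (Matrix.of fun _ _ => s⁻¹) with hGi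
  have hmul : (fromBlocks A (replicateCol Unit b) (replicateRow Unit b) (Matrix.of fun _ _ => c)) * Gi = 1 := by
    rw [hGi, fromBlocks_multiply, ← fromBlocks_one]
    have e11 : A * (A⁻¹ + s⁻¹ • (replicateCol Unit w * replicateRow Unit w)) +
        replicateCol Unit b * ((-s⁻¹) • replicateRow Unit w) = 1 := by
      rw [Matrix.mul_add, Matrix.mul_smul, Matrix.mul_smul, ← Matrix.mul_assoc,
        ← replicateCol_mulVec, hAw, mul_nonsing_inv _ hA]
      simp [smul_smul]
    have e12 : A * ((-s⁻¹) • replicateCol Unit w) + replicateCol Unit b * (Matrix.of fun _ _ => s⁻¹ : Matrix Unit Unit ℝ) = 0 := by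
      rw [Matrix.mul_smul, ← replicateCol_mulVec, hAw, myOfConst, Matrix.mul_smul, Matrix.mul_one]
      simp
    have key : s⁻¹ * (b ⬝ᵥ w) - s⁻¹ * c = -1 := by
      field_simp
      rw [hsdef]; ring
    have e21 : replicateRow Unit b * (A⁻¹ + s⁻¹ • (replicateCol Unit w * replicateRow Unit w)) +
        (Matrix.of fun _ _ => c : Matrix Unit Unit ℝ) * ((-s⁻¹) • replicateRow Unit w) = 0 := by
      rw [Matrix.mul_add, ← replicateRow_vecMul, hbAinv, Matrix.mul_smul, ← Matrix.mul_assoc,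
        replicateRow_mul_replicateCol, myOfConst (b ⬝ᵥ w), myOfConst c]
      ext i k
      simp [Matrix.add_apply, Matrix.smul_apply, Matrix.one_mul, smul_eq_mul]
      linear_combination (w k) * key
    have e22 : replicateRow Unit b * ((-s⁻¹) • replicateCol Unit w) +
        (Matrix.of fun _ _ => c : Matrix Unit Unit ℝ) * (Matrix.of fun _ _ => s⁻¹ : Matrix Unit Unit ℝ) = 1 := by
      rw [Matrix.mul_smul, replicateRow_mul_replicateCol, myOfConst (b ⬝ᵥ w), myOfConst c, myOfConst s⁻¹]
      ext i k
      simp [Matrix.add_apply, Matrix.smul_apply, Matrix.one_apply, Subsingleton.elim i k,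
        smul_eq_mul]
      linear_combination -key
    rw [e11, e12, e21, e22]
  have hGinv : (fromBlocks A (replicateCol Unit b) (replicateRow Unit b) (Matrix.of fun _ _ => c))⁻¹ = Gi :=
    inv_eq_right_inv hmul
  rw [hGinv, hGi, fromBlocks_multiply, myTrace_fromBlocks]
  have t11 : ((A⁻¹ + s⁻¹ • (replicateCol Unit w * replicateRow Unit w)) * Sg +
      (-s⁻¹) • replicateCol Unit w * replicateRow Unit σ).trace =
      (A⁻¹ * Sg).trace + s⁻¹ * (w ⬝ᵥ (Sg *ᵥ w)) - s⁻¹ * (w ⬝ᵥ σ) := by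
    rw [Matrix.add_mul, Matrix.smul_mul, Matrix.smul_mul, trace_add, trace_add, trace_smul,
      trace_smul, Matrix.mul_assoc, ← replicateRow_vecMul, myTrace_col_mul_row, myTrace_col_mul_row]
    have : w ⬝ᵥ (w ᵥ* Sg) = w ⬝ᵥ (Sg *ᵥ w) := by
      rw [dotProduct_mulVec, dotProduct_comm]
    rw [this]
    simp [smul_eq_mul]
    ring
  have t22 : ((-s⁻¹) • replicateRow Unit w * replicateCol Unit σ +
      (Matrix.of fun _ _ => s⁻¹) * (Matrix.of fun _ _ => cjj)).trace =
      -(s⁻¹ * (w ⬝ᵥ σ)) + s⁻¹ * cjj := by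
    rw [Matrix.smul_mul, replicateRow_mul_replicateCol, myOfConst (w ⬝ᵥ σ), myOfConst s⁻¹, myOfConst cjj]
    simp [Matrix.trace, Matrix.diag, Matrix.smul_apply, Matrix.one_apply, Matrix.mul_apply,
      smul_eq_mul]
    ring
  rw [t11, t22]
  rw [div_eq_inv_mul]
  ring
end Core
open Matrix
set_option linter.unusedSectionVars false

section Quad
variable {p : Type*} [Fintype p] [DecidableEq p]

lemma myQuad (A : Matrix p p ℝ) (b : p → ℝ) (c : ℝ) (u : p → ℝ) :
    star (Sum.elim u (fun _ => (1:ℝ))) ⬝ᵥ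
      ((fromBlocks A (replicateCol Unit b) (replicateRow Unit b) (Matrix.of fun _ _ => c)) *ᵥ
        Sum.elim u (fun _ => 1)) = u ⬝ᵥ (A *ᵥ u) + u ⬝ᵥ b + b ⬝ᵥ u + c := by
  rw [star_trivial, fromBlocks_mulVec, sumElim_dotProduct_sumElim]
  simp only [Sum.elim_comp_inl, Sum.elim_comp_inr]
  have h1 : (replicateCol Unit b) *ᵥ (fun _ => (1:ℝ)) = b := by
    funext i; simp [Matrix.mulVec, dotProduct]
  have h3 : (Matrix.of fun _ _ => c : Matrix Unit Unit ℝ) *ᵥ (fun _ => (1:ℝ)) = fun _ => c := by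
    funext i; simp [Matrix.mulVec, dotProduct]
  rw [h1, h3, dotProduct_add, dotProduct_add]
  have h2 : (fun _ => (1:ℝ)) ⬝ᵥ ((replicateRow Unit b) *ᵥ u) = b ⬝ᵥ u := by
    simp [Matrix.mulVec, dotProduct]
  have h4 : (fun _ : Unit => (1:ℝ)) ⬝ᵥ (fun _ : Unit => c) = c := by simp [dotProduct]
  rw [h2, h4]
  ring

def insertEquiv {α : Type*} [DecidableEq α] {S : Finset α} {j : α} (hj : j ∉ S) :
    {x // x ∈ S} ⊕ Unit ≃ {x // x ∈ insert j S} where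
  toFun := Sum.elim (fun a => ⟨a.1, Finset.mem_insert_of_mem a.2⟩)
    (fun _ => ⟨j, Finset.mem_insert_self j S⟩)
  invFun := fun i => if h : i.1 ∈ S then Sum.inl ⟨i.1, h⟩ else Sum.inr ()
  left_inv := by
    rintro (a | u)
    · simp [a.2]
    · simp [hj]
  right_inv := by
    rintro ⟨i, hi⟩
    by_cases h : i ∈ S
    · simp [h]
    · have hij : i = j := by
        rcases Finset.mem_insert.mp hi with h1 | h1
        · exact h1
        · exact absurd h1 h
      subst hij
      simp [hj]

@[simp] lemma insertEquiv_inl {α : Type*} [DecidableEq α] {S : Finset α} {j : α} (hj : j ∉ S)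
    (a : {x // x ∈ S}) : (insertEquiv hj (Sum.inl a) : α) = a.1 := rfl

@[simp] lemma insertEquiv_inr {α : Type*} [DecidableEq α] {S : Finset α} {j : α} (hj : j ∉ S)
    (u : Unit) : (insertEquiv hj (Sum.inr u) : α) = j := rfl

end Quad

variable {n d : ℕ}

set_option maxHeartbeats 2000000 in
/-- Increment of the predictive model degrees of freedom when one new
variable `j` is added to the subset `S₁`:
`df_R(S₂) − df_R(S₁) = 1/2 + (n/2)·(ζᵀCζ + 1)/(ζᵀ(Iₙ − H)ζ)`. -/
theorem dfR_increment
    (X : Matrix (Fin n) (Fin d) ℝ) (Sig : Matrix (Fin d) (Fin d) ℝ)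
    (hSig : Sig.PosSemidef)
    (S₁ : Finset (Fin d)) (hS₁card : S₁.card < n)
    (j : Fin d) (hj : j ∉ S₁)
    (hrank : (colSub X (insert j S₁)).rank = (insert j S₁).card)
    (hpd : (prinSub Sig (insert j S₁)).PosDef)
    (X₁ : Matrix (Fin n) {x // x ∈ S₁} ℝ) (hX₁ : X₁ = colSub X S₁)
    (Sig₁ : Matrix {x // x ∈ S₁} {x // x ∈ S₁} ℝ) (hSig₁ : Sig₁ = prinSub Sig S₁)
    (sigj : {x // x ∈ S₁} → ℝ) (hsigj : ∀ i, sigj i = Sig i.val j)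
    (ζ : Fin n → ℝ)
    (hζ : ∀ i, ζ i =
      (X i j - (X₁ *ᵥ (Sig₁⁻¹ *ᵥ sigj)) i) /
        Real.sqrt (Sig j j - sigj ⬝ᵥ (Sig₁⁻¹ *ᵥ sigj)))
    (C H : Matrix (Fin n) (Fin n) ℝ)
    (hC : C = X₁ * (X₁ᵀ * X₁)⁻¹ * Sig₁ * (X₁ᵀ * X₁)⁻¹ * X₁ᵀ)
    (hH : H = X₁ * (X₁ᵀ * X₁)⁻¹ * X₁ᵀ) :
    dfR X Sig (insert j S₁) - dfR X Sig S₁ =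
      1 / 2 + ((n : ℝ) / 2) * ((ζ ⬝ᵥ (C *ᵥ ζ) + 1) / (ζ ⬝ᵥ ((1 - H) *ᵥ ζ))) := by
  classical
  set S₂ := insert j S₁ with hS₂
  set e := insertEquiv hj with he
  set xj : Fin n → ℝ := fun i => X i j with hxj
  set M : Matrix (Fin n) ({x // x ∈ S₁} ⊕ Unit) ℝ := fromCols X₁ (replicateCol Unit xj) with hM
  -- symmetry of Sig
  have hSsym : ∀ a b : Fin d, Sig a b = Sig b a := fun a b => by
    have h1 := congrFun (congrFun hSig.1 a) b
    simpa [Matrix.conjTranspose_apply] using h1.symm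
  -- identification of colSub X S₂
  have hMsub : M = (colSub X S₂).submatrix id e := by
    ext i k
    cases k with
    | inl a => simp [hM, colSub, hX₁, he]
    | inr u => simp [hM, colSub, he, hxj]
  have hcol2 : colSub X S₂ = M.submatrix id e.symm := by
    rw [hMsub, submatrix_submatrix]
    simp
  -- Gram matrix in block form
  set A := X₁ᵀ * X₁ with hA
  set bb := X₁ᵀ *ᵥ xj with hbb
  set cc := xj ⬝ᵥ xj with hcc
  have hG : Mᵀ * M = fromBlocks A (replicateCol Unit bb) (replicateRow Unit bb) (Matrix.of fun _ _ => cc) := by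
    rw [hM, transpose_fromCols, transpose_replicateCol, fromRows_mul_fromCols, hA, hbb, hcc,
      ← replicateCol_mulVec, ← replicateRow_vecMul, ← mulVec_transpose, replicateRow_mul_replicateCol]
  have hGram2 : (colSub X S₂)ᵀ * colSub X S₂ = (Mᵀ * M).submatrix e.symm e.symm := by
    rw [hcol2, transpose_submatrix]
    have h1 := submatrix_mul_equiv Mᵀ M (⇑e.symm) (Equiv.refl (Fin n)) (⇑e.symm)
    simpa using h1
  -- prinSub in block form
  set Sgb := fromBlocks Sig₁ (replicateCol Unit sigj) (replicateRow Unit sigj) (Matrix.of fun _ _ => Sig j j)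
    with hSgbdef
  have hSgb : Sgb = (prinSub Sig S₂).submatrix e e := by
    ext k l
    cases k with
    | inl a =>
      cases l with
      | inl b => simp [hSgbdef, prinSub, hSig₁, he]
      | inr u => simp [hSgbdef, prinSub, hsigj, he]
    | inr u =>
      cases l with
      | inl b =>
        simp only [hSgbdef, fromBlocks_apply₂₁, Matrix.replicateRow_apply, prinSub, submatrix_apply,
          Matrix.of_apply, hsigj, he]
        exact hSsym b.1 j
      | inr v => simp [hSgbdef, prinSub, he]
  have hprin2 : prinSub Sig S₂ = Sgb.submatrix e.symm e.symm := by
    rw [hSgb, submatrix_submatrix]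
    simp
  -- positivity of the Gram matrix
  have hGpd : (fromBlocks A (replicateCol Unit bb) (replicateRow Unit bb)
      (Matrix.of fun _ _ => cc)).PosDef := by
    rw [← hG]
    have h1 : ((colSub X S₂)ᵀ * colSub X S₂).PosDef := by
      have := myGram_posDef (M := colSub X S₂) (by rw [hrank, Fintype.card_coe])
      exact this
    have h2 := myPosDef_submatrix_equiv h1 e
    rw [hGram2] at h2
    have h3 : (((Mᵀ * M).submatrix ⇑e.symm ⇑e.symm).submatrix ⇑e ⇑e) = Mᵀ * M := by
      rw [submatrix_submatrix]
      simp
    rwa [h3] at h2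
  have hApd : A.PosDef := myPosDef_blocks₁₁ hGpd
  have hAdet : IsUnit A.det := hApd.det_pos.ne'.isUnit
  have hAs : Aᵀ = A := by rw [hA, transpose_mul, transpose_transpose]
  have hAis : (A⁻¹)ᵀ = A⁻¹ := by rw [transpose_nonsing_inv, hAs]
  set w := A⁻¹ *ᵥ bb with hw
  have hAw : A *ᵥ w = bb := by rw [hw, mulVec_mulVec, mul_nonsing_inv _ hAdet, one_mulVec]
  have hs : 0 < cc - bb ⬝ᵥ w := by
    have hy : Sum.elim (-w) (fun _ : Unit => (1:ℝ)) ≠ 0 := by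
      intro h0
      have := congrFun h0 (Sum.inr ())
      simp at this
    have h1 := hGpd.dotProduct_mulVec_pos hy
    rw [myQuad] at h1
    have h2 : (-w) ⬝ᵥ (A *ᵥ (-w)) = w ⬝ᵥ bb := by
      rw [mulVec_neg, dotProduct_neg, neg_dotProduct, neg_neg, hAw]
    rw [h2, neg_dotProduct, dotProduct_neg] at h1
    have h3 : w ⬝ᵥ bb = bb ⬝ᵥ w := dotProduct_comm _ _
    linarith
  -- positivity of the Sigma block
  have hSgbpd : Sgb.PosDef := by rw [hSgb]; exact myPosDef_submatrix_equiv hpd e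
  have hS1pd : Sig₁.PosDef := myPosDef_blocks₁₁ (hSgbdef ▸ hSgbpd)
  have hS1det : IsUnit Sig₁.det := hS1pd.det_pos.ne'.isUnit
  have hS1s : Sig₁ᵀ = Sig₁ := by
    ext a b
    rw [transpose_apply, hSig₁]
    exact hSsym b.1 a.1
  have hS1is : (Sig₁⁻¹)ᵀ = Sig₁⁻¹ := by rw [transpose_nonsing_inv, hS1s]
  set g := Sig₁⁻¹ *ᵥ sigj with hg
  have hSg : Sig₁ *ᵥ g = sigj := by
    rw [hg, mulVec_mulVec, mul_nonsing_inv _ hS1det, one_mulVec]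
  have hτ : 0 < Sig j j - sigj ⬝ᵥ g := by
    have hy : Sum.elim (-g) (fun _ : Unit => (1:ℝ)) ≠ 0 := by
      intro h0
      have := congrFun h0 (Sum.inr ())
      simp at this
    have h1 := hSgbpd.dotProduct_mulVec_pos hy
    rw [hSgbdef, myQuad] at h1
    have h2 : (-g) ⬝ᵥ (Sig₁ *ᵥ (-g)) = g ⬝ᵥ sigj := by
      rw [mulVec_neg, dotProduct_neg, neg_dotProduct, neg_neg, hSg]
    rw [h2, neg_dotProduct, dotProduct_neg] at h1
    have h3 : g ⬝ᵥ sigj = sigj ⬝ᵥ g := dotProduct_comm _ _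
    linarith
  set τ := Sig j j - sigj ⬝ᵥ g with hτdef
  -- trace computation
  have hTr2 : (((colSub X S₂)ᵀ * colSub X S₂)⁻¹ * prinSub Sig S₂).trace
      = (A⁻¹ * Sig₁).trace +
        (w ⬝ᵥ (Sig₁ *ᵥ w) - 2 * (w ⬝ᵥ sigj) + Sig j j) / (cc - bb ⬝ᵥ w) := by
    rw [hGram2, hprin2, inv_submatrix_equiv,
      submatrix_mul_equiv ((Mᵀ * M)⁻¹) Sgb (⇑e.symm) e.symm (⇑e.symm),
      myTrace_submatrix_equiv, hG, hSgbdef,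
      myBlock_inv_trace A bb cc Sig₁ sigj (Sig j j) hAdet hAs hs.ne']
  have hTr1 : ((colSub X S₁)ᵀ * colSub X S₁)⁻¹ * prinSub Sig S₁ = A⁻¹ * Sig₁ := by
    rw [← hX₁, ← hSig₁, hA]
  -- the zeta vector
  set u : Fin n → ℝ := xj - X₁ *ᵥ g with hu
  have hζ' : ζ = (Real.sqrt τ)⁻¹ • u := by
    funext i
    rw [hζ i, div_eq_inv_mul]
    rfl
  have hsq : (Real.sqrt τ)⁻¹ * (Real.sqrt τ)⁻¹ = τ⁻¹ := by
    rw [← mul_inv, Real.mul_self_sqrt hτ.le]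
  have hXtu : X₁ᵀ *ᵥ u = bb - A *ᵥ g := by
    rw [hu, mulVec_sub, mulVec_mulVec, ← hbb, ← hA]
  have hAiXtu : A⁻¹ *ᵥ (X₁ᵀ *ᵥ u) = w - g := by
    rw [hXtu, mulVec_sub, ← hw, mulVec_mulVec, nonsing_inv_mul _ hAdet, one_mulVec]
  have hdotX : ∀ z : {x // x ∈ S₁} → ℝ, u ⬝ᵥ (X₁ *ᵥ z) = (X₁ᵀ *ᵥ u) ⬝ᵥ z := fun z => by
    rw [dotProduct_mulVec, ← mulVec_transpose]
  have hdotAi : ∀ y z : {x // x ∈ S₁} → ℝ, y ⬝ᵥ (A⁻¹ *ᵥ z) = (A⁻¹ *ᵥ y) ⬝ᵥ z := fun y z => by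
    rw [dotProduct_mulVec, ← mulVec_transpose, hAis]
  have hCu : u ⬝ᵥ (C *ᵥ u) = (w - g) ⬝ᵥ (Sig₁ *ᵥ (w - g)) := by
    rw [hC]
    have hassoc : (X₁ * A⁻¹ * Sig₁ * A⁻¹ * X₁ᵀ) *ᵥ u
        = X₁ *ᵥ (A⁻¹ *ᵥ (Sig₁ *ᵥ (A⁻¹ *ᵥ (X₁ᵀ *ᵥ u)))) := by
      rw [← mulVec_mulVec, ← mulVec_mulVec, ← mulVec_mulVec, ← mulVec_mulVec]
    rw [hassoc, hAiXtu, hdotX, hdotAi, hAiXtu]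
  have hNum : (w - g) ⬝ᵥ (Sig₁ *ᵥ (w - g)) + τ
      = w ⬝ᵥ (Sig₁ *ᵥ w) - 2 * (w ⬝ᵥ sigj) + Sig j j := by
    have hgS : ∀ z : {x // x ∈ S₁} → ℝ, g ⬝ᵥ (Sig₁ *ᵥ z) = sigj ⬝ᵥ z := fun z => by
      rw [dotProduct_mulVec, ← mulVec_transpose, hS1s, hSg]
    rw [mulVec_sub, dotProduct_sub, sub_dotProduct, sub_dotProduct, hSg, hgS]
    have h1 : w ⬝ᵥ sigj = sigj ⬝ᵥ w := dotProduct_comm _ _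
    have h2 : g ⬝ᵥ sigj = sigj ⬝ᵥ g := dotProduct_comm _ _
    rw [hτdef]
    linarith
  have hDen : u ⬝ᵥ ((1 - H) *ᵥ u) = cc - bb ⬝ᵥ w := by
    rw [sub_mulVec, one_mulVec, dotProduct_sub]
    have h1 : H *ᵥ u = X₁ *ᵥ (w - g) := by
      rw [hH]
      have hassoc : (X₁ * A⁻¹ * X₁ᵀ) *ᵥ u = X₁ *ᵥ (A⁻¹ *ᵥ (X₁ᵀ *ᵥ u)) := by
        rw [← mulVec_mulVec, ← mulVec_mulVec]
      rw [hassoc, hAiXtu]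
    have h2 : u ⬝ᵥ (H *ᵥ u) = (bb - A *ᵥ g) ⬝ᵥ (w - g) := by
      rw [h1, hdotX, hXtu]
    have h3 : u ⬝ᵥ u = cc - 2 * (bb ⬝ᵥ g) + g ⬝ᵥ (A *ᵥ g) := by
      rw [hu, dotProduct_sub, sub_dotProduct, sub_dotProduct]
      have e1 : xj ⬝ᵥ (X₁ *ᵥ g) = bb ⬝ᵥ g := by
        rw [dotProduct_mulVec, ← mulVec_transpose, ← hbb]
      have e2 : (X₁ *ᵥ g) ⬝ᵥ xj = bb ⬝ᵥ g := by rw [dotProduct_comm]; exact e1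
      have e3 : (X₁ *ᵥ g) ⬝ᵥ (X₁ *ᵥ g) = g ⬝ᵥ (A *ᵥ g) := by
        rw [dotProduct_mulVec, ← mulVec_transpose, mulVec_mulVec, ← hA, dotProduct_comm]
      rw [e1, e2, e3, ← hcc]
      ring
    have h4 : (bb - A *ᵥ g) ⬝ᵥ (w - g) = bb ⬝ᵥ w - 2 * (bb ⬝ᵥ g) + g ⬝ᵥ (A *ᵥ g) := by
      rw [sub_dotProduct, dotProduct_sub, dotProduct_sub]
      have e1 : (A *ᵥ g) ⬝ᵥ w = bb ⬝ᵥ g := by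
        rw [dotProduct_comm, dotProduct_mulVec, ← mulVec_transpose, hAs, hAw, dotProduct_comm]
      have e2 : (A *ᵥ g) ⬝ᵥ g = g ⬝ᵥ (A *ᵥ g) := dotProduct_comm _ _
      rw [e1, e2]
      ring
    rw [h2, h3, h4]
    ring
  -- quadratic forms of zeta
  have hζC : ζ ⬝ᵥ (C *ᵥ ζ) = τ⁻¹ * (u ⬝ᵥ (C *ᵥ u)) := by
    rw [hζ', mulVec_smul, dotProduct_smul, smul_dotProduct, smul_eq_mul, smul_eq_mul,
      ← mul_assoc, hsq]
  have hζH : ζ ⬝ᵥ ((1 - H) *ᵥ ζ) = τ⁻¹ * (u ⬝ᵥ ((1 - H) *ᵥ u)) := by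
    rw [hζ', mulVec_smul, dotProduct_smul, smul_dotProduct, smul_eq_mul, smul_eq_mul,
      ← mul_assoc, hsq]
  -- final assembly
  have hcard : (S₂.card : ℝ) = (S₁.card : ℝ) + 1 := by
    rw [hS₂, Finset.card_insert_of_notMem hj]
    push_cast
    ring
  rw [dfR, dfR, hTr2, hTr1, hcard, hζC, hζH, hCu, hDen]
  have hfrac : (τ⁻¹ * ((w - g) ⬝ᵥ (Sig₁ *ᵥ (w - g))) + 1) / (τ⁻¹ * (cc - bb ⬝ᵥ w))
      = (w ⬝ᵥ (Sig₁ *ᵥ w) - 2 * (w ⬝ᵥ sigj) + Sig j j) / (cc - bb ⬝ᵥ w) := by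
    rw [← hNum]
    field_simp
  rw [hfrac]
  ring
end

section
/- Let ε : Ω → ℝⁿ be a square-integrable random vector with mean zero and E(ε εᵀ) = σ² Iₙ, let ε* be a real random variable with mean 0 and variance σ², let x* : Ω → T be a random element, and assume ε, ε*, x* are mutually independent. Let μ_vec ∈ ℝⁿ be fixed, let μ : T → ℝ and h : T → ℝⁿ be measurable with E(μ(x*)²) < ∞ and E‖h(x*)‖² < ∞, and set y* = μ(x*) + ε* and ŷ* = h(x*)ᵀ(μ_vec + ε). Then E[(y* − ŷ*)²] = σ² + E[(μ(x*) − h(x*)ᵀ μ_vec)²] + σ²·E[‖h(x*)‖²]. -/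
open Matrix MeasureTheory ProbabilityTheory

/-!
The prediction error splits as `y* − ŷ* = b(x*) + ε* − h(x*) ⬝ᵥ ε` with bias
`b = μ − h ⬝ᵥ μ_vec`. Independence and the zero means make the three summands pairwise
orthogonal in `L²`, and the noise term `h(x*) ⬝ᵥ ε` has second moment `σ² E‖h(x*)‖²`
because, after factorising `E[hᵢ hⱼ εᵢ εⱼ] = E[hᵢ hⱼ] E[εᵢ εⱼ]`, only the diagonal
`i = j` survives.
-/

theorem dotProduct_sq {ι : Type*} [Fintype ι] (u e : ι → ℝ) :
    (u ⬝ᵥ e) ^ 2 = (fun p : ι × ι => u p.1 * u p.2) ⬝ᵥ (fun p => e p.1 * e p.2) := by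
  simp only [dotProduct, sq, Finset.sum_mul_sum, ← Finset.univ_product_univ, Finset.sum_product]
  exact Finset.sum_congr rfl fun i _ => Finset.sum_congr rfl fun j _ => by ring

section

variable {Ω : Type*} [MeasurableSpace Ω] {P : Measure Ω}

theorem memLp_two_apply_of_integrable_sum_sq {ι : Type*} [Fintype ι] {u : Ω → ι → ℝ}
    (hu : ∀ i, AEStronglyMeasurable (fun ω => u ω i) P)
    (hint : Integrable (fun ω => ∑ i, u ω i ^ 2) P) (i : ι) :
    MemLp (fun ω => u ω i) 2 P := by
  refine (memLp_two_iff_integrable_sq (hu i)).2 (hint.mono ((hu i).pow 2) ?_)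
  filter_upwards with ω
  rw [Real.norm_of_nonneg (sq_nonneg _),
    Real.norm_of_nonneg (Finset.sum_nonneg fun j _ => sq_nonneg _)]
  exact Finset.single_le_sum (fun j _ => sq_nonneg (u ω j)) (Finset.mem_univ i)

theorem integral_add_add_sq_of_orthogonal {X Y Z : Ω → ℝ}
    (hX : MemLp X 2 P) (hY : MemLp Y 2 P) (hZ : MemLp Z 2 P)
    (hXY : ∫ ω, X ω * Y ω ∂P = 0) (hXZ : ∫ ω, X ω * Z ω ∂P = 0)
    (hYZ : ∫ ω, Y ω * Z ω ∂P = 0) :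
    ∫ ω, (X ω + Y ω + Z ω) ^ 2 ∂P =
      ∫ ω, X ω ^ 2 ∂P + ∫ ω, Y ω ^ 2 ∂P + ∫ ω, Z ω ^ 2 ∂P := by
  have hexpand : ∀ ω, (X ω + Y ω + Z ω) ^ 2 = X ω ^ 2 + Y ω ^ 2 + Z ω ^ 2
      + 2 * (X ω * Y ω) + 2 * (X ω * Z ω) + 2 * (Y ω * Z ω) := fun ω => by ring
  have iX := hX.integrable_sq
  have iY := hY.integrable_sq
  have iZ := hZ.integrable_sq
  have iXY : Integrable (fun ω => 2 * (X ω * Y ω)) P := (hX.integrable_mul hY).const_mul 2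
  have iXZ : Integrable (fun ω => 2 * (X ω * Z ω)) P := (hX.integrable_mul hZ).const_mul 2
  have iYZ : Integrable (fun ω => 2 * (Y ω * Z ω)) P := (hY.integrable_mul hZ).const_mul 2
  have i2 : Integrable (fun ω => X ω ^ 2 + Y ω ^ 2) P := iX.add iY
  have i3 : Integrable (fun ω => X ω ^ 2 + Y ω ^ 2 + Z ω ^ 2) P := i2.add iZ
  have i4 : Integrable (fun ω => X ω ^ 2 + Y ω ^ 2 + Z ω ^ 2 + 2 * (X ω * Y ω)) P :=
    i3.add iXY
  have i5 : Integrable (fun ω => X ω ^ 2 + Y ω ^ 2 + Z ω ^ 2 + 2 * (X ω * Y ω)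
      + 2 * (X ω * Z ω)) P := i4.add iXZ
  simp_rw [hexpand]
  rw [integral_add i5 iYZ, integral_add i4 iXZ, integral_add i3 iXY, integral_add i2 iZ,
    integral_add iX iY, integral_const_mul, integral_const_mul, integral_const_mul, hXY, hXZ, hYZ]
  ring

end

namespace ProbabilityTheory.IndepFun

variable {Ω ι : Type*} [MeasurableSpace Ω] {P : Measure Ω} [Fintype ι] {u e : Ω → ι → ℝ}

theorem integral_mul_eq_zero_of_integral_eq_zero {X Y : Ω → ℝ} (hXY : IndepFun X Y P)
    (hX : AEStronglyMeasurable X P) (hY : AEStronglyMeasurable Y P)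
    (hY0 : ∫ ω, Y ω ∂P = 0) :
    ∫ ω, X ω * Y ω ∂P = 0 := by
  rw [hXY.integral_fun_mul_eq_mul_integral hX hY, hY0, mul_zero]

theorem integral_dotProduct (hue : IndepFun u e P)
    (hu : ∀ i, Integrable (fun ω => u ω i) P) (he : ∀ i, Integrable (fun ω => e ω i) P) :
    ∫ ω, u ω ⬝ᵥ e ω ∂P = ∑ i, (∫ ω, u ω i ∂P) * ∫ ω, e ω i ∂P := by
  have hcoord : ∀ i, IndepFun (fun ω => u ω i) (fun ω => e ω i) P := fun i =>
    hue.comp (measurable_pi_apply i) (measurable_pi_apply i)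
  have hint : ∀ i ∈ Finset.univ, Integrable (fun ω => u ω i * e ω i) P := fun i _ =>
    (hcoord i).integrable_mul (hu i) (he i)
  simp only [dotProduct]
  rw [integral_finsetSum _ hint]
  exact Finset.sum_congr rfl fun i _ => (hcoord i).integral_fun_mul_eq_mul_integral
    (hu i).aestronglyMeasurable (he i).aestronglyMeasurable

theorem integral_dotProduct_eq_zero (hue : IndepFun u e P)
    (hu : ∀ i, Integrable (fun ω => u ω i) P) (he : ∀ i, Integrable (fun ω => e ω i) P)
    (he0 : ∀ i, ∫ ω, e ω i ∂P = 0) :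
    ∫ ω, u ω ⬝ᵥ e ω ∂P = 0 := by
  simp [hue.integral_dotProduct hu he, he0]

theorem integral_mul_dotProduct_eq_zero_of_smul_left {w : Ω → ℝ}
    (hind : IndepFun (fun ω => w ω • u ω) e P) (hw : MemLp w 2 P)
    (hu : ∀ i, MemLp (fun ω => u ω i) 2 P) (he : ∀ i, Integrable (fun ω => e ω i) P)
    (he0 : ∀ i, ∫ ω, e ω i ∂P = 0) :
    ∫ ω, w ω * (u ω ⬝ᵥ e ω) ∂P = 0 := by
  simp_rw [← smul_eq_mul, ← smul_dotProduct]
  exact hind.integral_dotProduct_eq_zero (fun i => hw.integrable_mul (hu i)) he he0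

theorem integral_mul_dotProduct_eq_zero_of_smul_right {s : Ω → ℝ}
    (hind : IndepFun u (fun ω => s ω • e ω) P) (hes : IndepFun e s P) (hs : MemLp s 2 P)
    (hs0 : ∫ ω, s ω ∂P = 0) (hu : ∀ i, Integrable (fun ω => u ω i) P)
    (he : ∀ i, MemLp (fun ω => e ω i) 2 P) :
    ∫ ω, s ω * (u ω ⬝ᵥ e ω) ∂P = 0 := by
  simp_rw [← smul_eq_mul, ← dotProduct_smul]
  refine hind.integral_dotProduct_eq_zero hu (fun i => hs.integrable_mul (he i)) fun i => ?_
  simp only [Pi.smul_apply, smul_eq_mul, mul_comm (s _)]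
  exact (hes.comp (measurable_pi_apply i) measurable_id).integral_mul_eq_zero_of_integral_eq_zero
    (he i).aestronglyMeasurable hs.aestronglyMeasurable hs0

theorem memLp_two_dotProduct (hue : IndepFun u e P)
    (hu : ∀ i, MemLp (fun ω => u ω i) 2 P) (he : ∀ i, MemLp (fun ω => e ω i) 2 P) :
    MemLp (fun ω => u ω ⬝ᵥ e ω) 2 P := by
  refine memLp_finsetSum _ fun i _ => ?_
  refine (memLp_two_iff_integrable_sq (f := fun ω => u ω i * e ω i)
    ((hu i).aestronglyMeasurable.mul (he i).aestronglyMeasurable)).2 ?_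
  have hsq : IndepFun (fun ω => u ω i ^ 2) (fun ω => e ω i ^ 2) P :=
    hue.comp ((measurable_pi_apply i).pow_const 2) ((measurable_pi_apply i).pow_const 2)
  have hint : Integrable (fun ω => u ω i ^ 2 * e ω i ^ 2) P :=
    hsq.integrable_mul (hu i).integrable_sq (he i).integrable_sq
  simpa only [mul_pow] using hint

theorem integral_dotProduct_sq [DecidableEq ι] (hue : IndepFun u e P)
    (hu : ∀ i, MemLp (fun ω => u ω i) 2 P) (he : ∀ i, MemLp (fun ω => e ω i) 2 P)
    {σ2 : ℝ} (hmom : ∀ i j, ∫ ω, e ω i * e ω j ∂P = σ2 * (1 : Matrix ι ι ℝ) i j) :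
    ∫ ω, (u ω ⬝ᵥ e ω) ^ 2 ∂P = σ2 * ∫ ω, ∑ i, u ω i ^ 2 ∂P := by
  have houter : Measurable fun (v : ι → ℝ) (p : ι × ι) => v p.1 * v p.2 := by fun_prop
  have houter_indep : IndepFun (fun ω (p : ι × ι) => u ω p.1 * u ω p.2)
      (fun ω (p : ι × ι) => e ω p.1 * e ω p.2) P := hue.comp houter houter
  simp only [dotProduct_sq]
  rw [houter_indep.integral_dotProduct
      (fun p => (hu p.1).integrable_mul (hu p.2)) (fun p => (he p.1).integrable_mul (he p.2)),
    integral_finsetSum _ fun i _ => (hu i).integrable_sq, Finset.mul_sum,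
    ← Finset.univ_product_univ, Finset.sum_product]
  refine Finset.sum_congr rfl fun i _ => ?_
  simp only [hmom, Matrix.one_apply, mul_ite, mul_one, mul_zero, Finset.sum_ite_eq,
    Finset.mem_univ, if_true, sq]
  ring

end ProbabilityTheory.IndepFun

theorem randomX_bias_variance_decomposition_general
    {Ω T : Type*} [MeasurableSpace Ω] [MeasurableSpace T]
    (P : Measure Ω) [IsProbabilityMeasure P]
    {n : ℕ} (σ2 : ℝ)
    (ε : Ω → Fin n → ℝ)
    (hεL2 : ∀ i, MemLp (fun ω => ε ω i) 2 P)
    (hεmean : ∀ i, ∫ ω, ε ω i ∂P = 0)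
    (hεmom : ∀ i j, ∫ ω, ε ω i * ε ω j ∂P = σ2 * (1 : Matrix (Fin n) (Fin n) ℝ) i j)
    (εstar : Ω → ℝ)
    (hεstarL2 : MemLp εstar 2 P)
    (hεstarmean : ∫ ω, εstar ω ∂P = 0)
    (hεstarvar : ∫ ω, (εstar ω) ^ 2 ∂P = σ2)
    (xstar : Ω → T) (hxmeas : Measurable xstar)
    (hindep₁ : IndepFun ε εstar P)
    (hindep₂ : IndepFun (fun ω => (ε ω, εstar ω)) xstar P)
    (μvec : Fin n → ℝ)
    (μ : T → ℝ) (hμmeas : Measurable μ)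
    (hμL2 : MemLp (fun ω => μ (xstar ω)) 2 P)
    (h : T → Fin n → ℝ) (hhmeas : Measurable h)
    (hhint : Integrable (fun ω => ∑ i, (h (xstar ω) i) ^ 2) P)
    (ystar yhat : Ω → ℝ)
    (hystar : ∀ ω, ystar ω = μ (xstar ω) + εstar ω)
    (hyhat : ∀ ω, yhat ω = h (xstar ω) ⬝ᵥ (μvec + ε ω)) :
    ∫ ω, (ystar ω - yhat ω) ^ 2 ∂P =
      σ2 + (∫ ω, (μ (xstar ω) - h (xstar ω) ⬝ᵥ μvec) ^ 2 ∂P) +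
        σ2 * ∫ ω, ∑ i, (h (xstar ω) i) ^ 2 ∂P := by
  set bias : T → ℝ := fun t => μ t - h t ⬝ᵥ μvec with hbias
  have hbias_meas : Measurable bias := by simp only [hbias, dotProduct]; fun_prop
  have hxe : IndepFun xstar (fun ω => (ε ω, εstar ω)) P := hindep₂.symm
  have hhL2 : ∀ i, MemLp (fun ω => h (xstar ω) i) 2 P :=
    memLp_two_apply_of_integrable_sum_sq
      (fun i => (by fun_prop : Measurable fun ω => h (xstar ω) i).aestronglyMeasurable) hhint
  have hbiasL2 : MemLp (fun ω => bias (xstar ω)) 2 P :=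
    hμL2.sub (memLp_finsetSum _ fun i _ => (hhL2 i).mul_const (μvec i))
  have hhε : IndepFun (fun ω => h (xstar ω)) ε P := hxe.comp hhmeas measurable_fst
  have hnoiseL2 : MemLp (fun ω => h (xstar ω) ⬝ᵥ ε ω) 2 P :=
    hhε.memLp_two_dotProduct hhL2 hεL2
  have hbias_εstar : ∫ ω, bias (xstar ω) * εstar ω ∂P = 0 :=
    (hxe.comp hbias_meas measurable_snd).integral_mul_eq_zero_of_integral_eq_zero
      hbiasL2.aestronglyMeasurable hεstarL2.aestronglyMeasurable hεstarmean
  have hbias_noise : ∫ ω, bias (xstar ω) * (h (xstar ω) ⬝ᵥ ε ω) ∂P = 0 :=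
    IndepFun.integral_mul_dotProduct_eq_zero_of_smul_left
      (hxe.comp (hbias_meas.smul hhmeas) measurable_fst) hbiasL2 hhL2
      (fun i => (hεL2 i).integrable one_le_two) hεmean
  have hεstar_noise : ∫ ω, εstar ω * (h (xstar ω) ⬝ᵥ ε ω) ∂P = 0 :=
    IndepFun.integral_mul_dotProduct_eq_zero_of_smul_right
      (hxe.comp hhmeas (measurable_snd.smul measurable_fst)) hindep₁ hεstarL2 hεstarmean
      (fun i => (hhL2 i).integrable one_le_two) hεL2
  have hsplit : ∀ ω, ystar ω - yhat ω
      = bias (xstar ω) + εstar ω + -(h (xstar ω) ⬝ᵥ ε ω) := fun ω => by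
    rw [hystar, hyhat, dotProduct_add]; ring
  simp_rw [hsplit]
  rw [integral_add_add_sq_of_orthogonal (Z := fun ω => -(h (xstar ω) ⬝ᵥ ε ω))
      hbiasL2 hεstarL2 hnoiseL2.neg hbias_εstar
      (by simp only [mul_neg, integral_neg, hbias_noise, neg_zero])
      (by simp only [mul_neg, integral_neg, hεstar_noise, neg_zero]),
    hεstarvar]
  simp only [neg_sq, hhε.integral_dotProduct_sq hhL2 hεL2 hεmom]
  ring

/-- **Random-X bias–variance decomposition.**
With `y* = μ(x*) + ε*` and `ŷ* = h(x*)ᵀ(μ_vec + ε)`, where `ε` has mean zero and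
second-moment matrix `σ² Iₙ`, `ε*` has mean zero and variance `σ²`, and `ε, ε*, x*` are
mutually independent:
`E[(y* − ŷ*)²] = σ² + E[(μ(x*) − h(x*)ᵀμ_vec)²] + σ²·E[‖h(x*)‖²]`. -/
theorem randomX_bias_variance_decomposition
    {Ω T : Type*} [MeasurableSpace Ω] [MeasurableSpace T]
    (P : Measure Ω) [IsProbabilityMeasure P]
    {n : ℕ} (σ2 : ℝ)
    (ε : Ω → Fin n → ℝ) (hεmeas : Measurable ε)
    (hεL2 : ∀ i, MemLp (fun ω => ε ω i) 2 P)
    (hεmean : ∀ i, ∫ ω, ε ω i ∂P = 0)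
    (hεmom : ∀ i j, ∫ ω, ε ω i * ε ω j ∂P = σ2 * (1 : Matrix (Fin n) (Fin n) ℝ) i j)
    (εstar : Ω → ℝ) (hεstarmeas : Measurable εstar)
    (hεstarL2 : MemLp εstar 2 P)
    (hεstarmean : ∫ ω, εstar ω ∂P = 0)
    (hεstarvar : ∫ ω, (εstar ω) ^ 2 ∂P = σ2)
    (xstar : Ω → T) (hxmeas : Measurable xstar)
    (hindep₁ : IndepFun ε εstar P)
    (hindep₂ : IndepFun (fun ω => (ε ω, εstar ω)) xstar P)
    (μvec : Fin n → ℝ)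
    (μ : T → ℝ) (hμmeas : Measurable μ)
    (hμL2 : MemLp (fun ω => μ (xstar ω)) 2 P)
    (h : T → Fin n → ℝ) (hhmeas : Measurable h)
    (hhint : Integrable (fun ω => ∑ i, (h (xstar ω) i) ^ 2) P)
    (ystar yhat : Ω → ℝ)
    (hystar : ∀ ω, ystar ω = μ (xstar ω) + εstar ω)
    (hyhat : ∀ ω, yhat ω = h (xstar ω) ⬝ᵥ (μvec + ε ω)) :
    ∫ ω, (ystar ω - yhat ω) ^ 2 ∂P =
      σ2 + (∫ ω, (μ (xstar ω) - h (xstar ω) ⬝ᵥ μvec) ^ 2 ∂P) +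
        σ2 * ∫ ω, ∑ i, (h (xstar ω) i) ^ 2 ∂P :=
  randomX_bias_variance_decomposition_general P σ2 ε hεL2 hεmean hεmom εstar hεstarL2 hεstarmean
    hεstarvar xstar hxmeas hindep₁ hindep₂ μvec μ hμmeas hμL2 h hhmeas hhint ystar yhat hystar hyhat
end

section
/- Let X ∈ ℝ^{n×p} have full row rank with n < p, let y ∈ ℝⁿ, and let λ_max > 0 denote the largest eigenvalue of XᵀX. Fix α > 0 and define, for each initial value β^{(0)} ∈ ℝᵖ, the gradient descent iterates β^{(k)} = β^{(k-1)} + α Xᵀ(y − X β^{(k-1)}). Then the sequence (β^{(k)})_k converges for every initial value β^{(0)} ∈ ℝᵖ if and only if α < 2/λ_max. -/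
/-!
In an orthonormal eigenbasis of `A = XᵀX` the gradient step decouples into scalar recurrences
`zᵢ ↦ (1 - α λᵢ) zᵢ + α cᵢ`, where `c` is `Xᵀy` in that basis. If `0 < α λᵢ < 2` the factor
has modulus `< 1` and the recurrence converges; if `λᵢ = 0` it is constant, because `Xᵀy` is
orthogonal to `ker XᵀX = ker X`. Conversely, if `α λ_max ≥ 2`, two starting points differing by
a top eigenvector stay apart by `(1 - α λ_max)ᵏ` times that eigenvector, which does not converge.
-/

open Matrix Filter Topology

section AffineRecurrence

variable {μ d : ℝ} {x x' : ℕ → ℝ}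

lemma sub_eq_pow_mul_of_affine_rec (hx : ∀ k, x (k + 1) = μ * x k + d)
    (hx' : ∀ k, x' (k + 1) = μ * x' k + d) (k : ℕ) :
    x k - x' k = μ ^ k * (x 0 - x' 0) := by
  induction k with
  | zero => simp
  | succ k ih => rw [hx, hx', pow_succ]; linear_combination μ * ih

lemma tendsto_of_affine_rec_of_abs_lt_one (hμ : |μ| < 1) (hx : ∀ k, x (k + 1) = μ * x k + d) :
    Tendsto x atTop (𝓝 (d / (1 - μ))) := by
  have hμ1 : 1 - μ ≠ 0 := by linarith [le_abs_self μ]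
  have hfix : ∀ k : ℕ, d / (1 - μ) = μ * (d / (1 - μ)) + d := fun _ => by
    field_simp; ring
  have hclosed (k : ℕ) : x k = d / (1 - μ) + μ ^ k * (x 0 - d / (1 - μ)) := by
    linear_combination sub_eq_pow_mul_of_affine_rec (x' := fun _ => d / (1 - μ)) hx hfix k
  have := tendsto_const_nhds (x := d / (1 - μ)).add
    ((tendsto_pow_atTop_nhds_zero_of_abs_lt_one hμ).mul_const (x 0 - d / (1 - μ)))
  simpa [← hclosed] using this

lemma neg_one_lt_of_tendsto_pow {c : ℝ} (h : Tendsto (μ ^ ·) atTop (𝓝 c)) : -1 < μ := by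
  by_contra! hμ
  have hc : c = μ * c :=
    tendsto_nhds_unique ((tendsto_add_atTop_iff_nat 1).mpr h)
      (by simpa [pow_succ'] using h.const_mul μ)
  have hc0 : c = 0 := by nlinarith
  have := tendsto_pow_atTop_nhds_zero_iff.mp (hc0 ▸ h)
  linarith [neg_abs_le μ]

lemma neg_one_lt_of_tendsto_affine_rec {l l' : ℝ} (hx : ∀ k, x (k + 1) = μ * x k + d)
    (hx' : ∀ k, x' (k + 1) = μ * x' k + d) (h0 : x 0 ≠ x' 0)
    (hl : Tendsto x atTop (𝓝 l)) (hl' : Tendsto x' atTop (𝓝 l')) : -1 < μ := by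
  refine neg_one_lt_of_tendsto_pow (c := (l - l') / (x 0 - x' 0)) ?_
  have := (hl.sub hl').div_const (x 0 - x' 0)
  refine this.congr fun k => ?_
  rw [sub_eq_pow_mul_of_affine_rec hx hx', mul_div_cancel_right₀ _ (sub_ne_zero.mpr h0)]

end AffineRecurrence

lemma tendsto_of_tendsto_mulVec {R ι κ α : Type*} [Semiring R] [TopologicalSpace R]
    [IsTopologicalSemiring R] [Fintype ι] [Fintype κ] [DecidableEq ι]
    {M : Matrix ι κ R} {N : Matrix κ ι R} (hMN : M * N = 1)
    {f : α → ι → R} {l : Filter α} {z : κ → R} (h : Tendsto (fun a => N *ᵥ f a) l (𝓝 z)) :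
    Tendsto f l (𝓝 (M *ᵥ z)) := by
  have := ((continuous_const (y := M)).matrix_mulVec continuous_id).continuousAt.tendsto.comp h
  simpa [Function.comp_def, mulVec_mulVec, hMN] using this

variable {ι : Type*} [Fintype ι] [DecidableEq ι]

/-- The gradient step of size `α` for `b ↦ ½ bᵀAb - cᵀb`. -/
def gradStep (A : Matrix ι ι ℝ) (c : ι → ℝ) (α : ℝ) (b : ι → ℝ) : ι → ℝ :=
  b - α • (A *ᵥ b - c)

namespace Matrix.IsHermitian

variable {A : Matrix ι ι ℝ} (hA : A.IsHermitian)

lemma star_eigenvectorUnitary_mul :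
    star (hA.eigenvectorUnitary : Matrix ι ι ℝ) * A =
      diagonal hA.eigenvalues * star (hA.eigenvectorUnitary : Matrix ι ι ℝ) := by
  have h := hA.conjStarAlgAut_star_eigenvectorUnitary
  simp only [Unitary.conjStarAlgAut_apply, Unitary.coe_star, star_star] at h
  rw [RCLike.ofReal_real_eq_id, Function.id_comp] at h
  rw [← h, mul_assoc _ (hA.eigenvectorUnitary : Matrix ι ι ℝ),
    Unitary.mul_star_self_of_mem hA.eigenvectorUnitary.2, mul_one]

lemma star_eigenvectorUnitary_mulVec_gradStep_apply (c : ι → ℝ) (α : ℝ) (b : ι → ℝ) (i : ι) :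
    (star (hA.eigenvectorUnitary : Matrix ι ι ℝ) *ᵥ gradStep A c α b) i =
      (1 - α * hA.eigenvalues i) * (star (hA.eigenvectorUnitary : Matrix ι ι ℝ) *ᵥ b) i +
        α * (star (hA.eigenvectorUnitary : Matrix ι ι ℝ) *ᵥ c) i := by
  rw [gradStep, mulVec_sub, mulVec_smul, mulVec_sub, mulVec_mulVec b,
    hA.star_eigenvectorUnitary_mul, ← mulVec_mulVec]
  simp only [Pi.sub_apply, Pi.smul_apply, smul_eq_mul, mulVec_diagonal]
  ring

lemma star_eigenvectorUnitary_mulVec_iterate_gradStep_succ (c : ι → ℝ) (α : ℝ) (b : ι → ℝ)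
    (i : ι) (k : ℕ) :
    (star (hA.eigenvectorUnitary : Matrix ι ι ℝ) *ᵥ (gradStep A c α)^[k + 1] b) i =
      (1 - α * hA.eigenvalues i) *
          (star (hA.eigenvectorUnitary : Matrix ι ι ℝ) *ᵥ (gradStep A c α)^[k] b) i +
        α * (star (hA.eigenvectorUnitary : Matrix ι ι ℝ) *ᵥ c) i := by
  rw [Function.iterate_succ_apply']
  exact hA.star_eigenvectorUnitary_mulVec_gradStep_apply c α _ i

theorem exists_tendsto_iterate_gradStep {c : ι → ℝ} {α : ℝ}
    (h : ∀ i, |1 - α * hA.eigenvalues i| < 1 ∨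
      α * hA.eigenvalues i = 0 ∧ (star (hA.eigenvectorUnitary : Matrix ι ι ℝ) *ᵥ c) i = 0)
    (b : ι → ℝ) : ∃ L, Tendsto (fun k => (gradStep A c α)^[k] b) atTop (𝓝 L) := by
  set U := (hA.eigenvectorUnitary : Matrix ι ι ℝ)
  have hcoord (i : ι) :
      ∃ l, Tendsto (fun k => (star U *ᵥ (gradStep A c α)^[k] b) i) atTop (𝓝 l) := by
    have hrec := hA.star_eigenvectorUnitary_mulVec_iterate_gradStep_succ c α b i
    rcases h i with hμ | ⟨hμ, hc⟩
    · exact ⟨_, tendsto_of_affine_rec_of_abs_lt_one hμ hrec⟩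
    · refine ⟨(star U *ᵥ b) i, tendsto_const_nhds.congr fun k => ?_⟩
      induction k with
      | zero => rfl
      | succ k ih => rw [hrec, hμ, hc, ← ih]; ring
  choose l hl using hcoord
  exact ⟨U *ᵥ l, tendsto_of_tendsto_mulVec (Unitary.mul_star_self_of_mem hA.eigenvectorUnitary.2)
    (tendsto_pi_nhds.mpr hl)⟩

theorem mul_eigenvalues_lt_two_of_forall_exists_tendsto {c : ι → ℝ} {α : ℝ}
    (h : ∀ b, ∃ L, Tendsto (fun k => (gradStep A c α)^[k] b) atTop (𝓝 L)) (i : ι) :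
    α * hA.eigenvalues i < 2 := by
  set U := (hA.eigenvectorUnitary : Matrix ι ι ℝ)
  have hcoord (b : ι → ℝ) :
      ∃ l, Tendsto (fun k => (star U *ᵥ (gradStep A c α)^[k] b) i) atTop (𝓝 l) := by
    obtain ⟨L, hL⟩ := h b
    exact ⟨_, tendsto_pi_nhds.mp
      ((continuous_const.matrix_mulVec continuous_id).continuousAt.tendsto.comp hL) i⟩
  obtain ⟨l, hl⟩ := hcoord (hA.eigenvectorBasis i)
  obtain ⟨l', hl'⟩ := hcoord 0
  have hstart : (star U *ᵥ hA.eigenvectorBasis i) i ≠ (star U *ᵥ (0 : ι → ℝ)) i := by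
    simp [U, hA.star_eigenvectorUnitary_mulVec]
  have := neg_one_lt_of_tendsto_affine_rec
    (hA.star_eigenvectorUnitary_mulVec_iterate_gradStep_succ c α _ i)
    (hA.star_eigenvectorUnitary_mulVec_iterate_gradStep_succ c α _ i) hstart hl hl'
  linarith

end Matrix.IsHermitian

lemma Matrix.IsHermitian.star_eigenvectorUnitary_mulVec_transpose_mulVec_eq_zero {κ : Type*}
    [Fintype κ] {X : Matrix κ ι ℝ} (hA : (Xᵀ * X).IsHermitian) {i : ι}
    (hi : hA.eigenvalues i = 0) (y : κ → ℝ) :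
    (star (hA.eigenvectorUnitary : Matrix ι ι ℝ) *ᵥ (Xᵀ *ᵥ y)) i = 0 := by
  have hker : ⇑(hA.eigenvectorBasis i) ∈ LinearMap.ker (Xᵀ * X).mulVecLin := by
    rw [LinearMap.mem_ker, mulVecLin_apply, hA.mulVec_eigenvectorBasis, hi, zero_smul]
  rw [ker_mulVecLin_transpose_mul_self, LinearMap.mem_ker, mulVecLin_apply] at hker
  have hcoord : (star (hA.eigenvectorUnitary : Matrix ι ι ℝ) *ᵥ (Xᵀ *ᵥ y)) i =
      ⇑(hA.eigenvectorBasis i) ⬝ᵥ (Xᵀ *ᵥ y) := by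
    simp [mulVec, dotProduct]
  rw [hcoord, dotProduct_mulVec, vecMul_transpose, hker, zero_dotProduct]

theorem gradient_descent_converges_iff_general
    {n p : ℕ}
    (X : Matrix (Fin n) (Fin p) ℝ)
    (y : Fin n → ℝ)
    (hherm : (Xᵀ * X).IsHermitian)
    (lammax : ℝ) (hlam : IsGreatest (Set.range hherm.eigenvalues) lammax)
    (hlampos : 0 < lammax)
    (α : ℝ) (hα : 0 < α) :
    (∀ β0 : Fin p → ℝ, ∃ L : Fin p → ℝ,
        Tendsto (fun k : ℕ =>
            (fun b : Fin p → ℝ => b + α • (Xᵀ *ᵥ (y - X *ᵥ b)))^[k] β0)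
          atTop (nhds L)) ↔
      α < 2 / lammax := by
  have hstep : (fun b : Fin p → ℝ => b + α • (Xᵀ *ᵥ (y - X *ᵥ b))) =
      gradStep (Xᵀ * X) (Xᵀ *ᵥ y) α := by
    funext b
    simp only [gradStep, mulVec_sub, ← mulVec_mulVec, smul_sub]
    abel
  have hpsd : (Xᵀ * X).PosSemidef := by simpa using posSemidef_conjTranspose_mul_self X
  obtain ⟨i₀, hi₀⟩ := hlam.1
  rw [hstep, lt_div_iff₀ hlampos]
  constructor
  · intro h
    rw [← hi₀]
    exact hherm.mul_eigenvalues_lt_two_of_forall_exists_tendsto h i₀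
  · intro h
    refine hherm.exists_tendsto_iterate_gradStep fun i => ?_
    rcases (hpsd.eigenvalues_nonneg i).eq_or_lt with h0 | hpos
    · exact Or.inr ⟨by rw [← h0, mul_zero],
        hherm.star_eigenvectorUnitary_mulVec_transpose_mulVec_eq_zero h0.symm y⟩
    · have hle : α * hherm.eigenvalues i ≤ α * lammax :=
        mul_le_mul_of_nonneg_left (hlam.2 ⟨i, rfl⟩) hα.le
      exact Or.inl (abs_lt.mpr ⟨by linarith, by linarith [mul_pos hα hpos]⟩)

/-- Gradient descent for least squares with constant step size `α > 0`
converges for every initial value iff `α < 2/λ_max(XᵀX)`. -/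
theorem gradient_descent_converges_iff
    {n p : ℕ} (hnp : n < p)
    (X : Matrix (Fin n) (Fin p) ℝ) (hX : X.rank = n)
    (y : Fin n → ℝ)
    (hherm : (Xᵀ * X).IsHermitian)
    (lammax : ℝ) (hlam : IsGreatest (Set.range hherm.eigenvalues) lammax)
    (hlampos : 0 < lammax)
    (α : ℝ) (hα : 0 < α) :
    (∀ β0 : Fin p → ℝ, ∃ L : Fin p → ℝ,
        Tendsto (fun k : ℕ =>
            (fun b : Fin p → ℝ => b + α • (Xᵀ *ᵥ (y - X *ᵥ b)))^[k] β0)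
          atTop (nhds L)) ↔
      α < 2 / lammax :=
  gradient_descent_converges_iff_general X y hherm lammax hlam hlampos α hα
end

section
/- Let X ∈ ℝ^{n×p} have full row rank with n < p, let P = Xᵀ(XXᵀ)^{-1}X, let β ∈ ℝᵖ, let F ∈ ℝ^{p×n}, and set z = β − F X β. Let x* : Ω → ℝᵖ be a square-integrable random vector with E(x*) = 0 and E(x* x*ᵀ) = I_p. With h(x) = (XXᵀ)^{-1}Xx and h^{(∞)}(x) = h(x) + Fᵀ(I_p − P)x, the excess biases satisfy E[(x*ᵀβ − h^{(∞)}(x*)ᵀ X β)²] = E[(x*ᵀβ − h(x*)ᵀ X β)²] − ‖(I_p − P)β‖² + ‖(I_p − P)z‖². In particular, E[(x*ᵀβ − h(x*)ᵀ Xβ)²] = ‖(I_p − P)β‖² and E[(x*ᵀβ − h^{(∞)}(x*)ᵀ Xβ)²] = ‖(I_p − P)z‖². -/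
/-!
Both residuals are linear forms in the test point: `xᵀβ − h(x)ᵀXβ = xᵀ(I − P)β`, and, because
`P` is symmetric, `xᵀβ − h^{(∞)}(x)ᵀXβ = xᵀ(I − P)(β − FXβ)`. For isotropic `x*` the second
moment of a linear form is `E[(x*ᵀv)²] = ‖v‖²`, which gives both excess biases; the first claim
is their difference.
-/

open Matrix MeasureTheory

section SecondMoment

variable {Ω ι : Type*} [Fintype ι] [MeasurableSpace Ω] {μ : Measure Ω} {x : Ω → ι → ℝ}

theorem integral_dotProduct_sq (hx : ∀ i, MemLp (fun ω => x ω i) 2 μ) (v : ι → ℝ) :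
    ∫ ω, (x ω ⬝ᵥ v) ^ 2 ∂μ = v ⬝ᵥ (Matrix.of (fun i j => ∫ ω, x ω i * x ω j ∂μ) *ᵥ v) := by
  have hint (i j : ι) : Integrable (fun ω => v i * v j * (x ω i * x ω j)) μ :=
    ((hx i).integrable_mul (hx j)).const_mul _
  have hexpand (ω : Ω) : (x ω ⬝ᵥ v) ^ 2 = ∑ i, ∑ j, v i * v j * (x ω i * x ω j) := by
    simp only [sq, dotProduct, Finset.sum_mul_sum]
    exact Finset.sum_congr rfl fun i _ => Finset.sum_congr rfl fun j _ => by ring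
  simp_rw [hexpand]
  rw [integral_finsetSum _ fun i _ => integrable_finsetSum _ fun j _ => hint i j]
  simp_rw [integral_finsetSum _ fun j _ => hint _ j, integral_const_mul]
  simp only [dotProduct, mulVec, of_apply, Finset.mul_sum]
  exact Finset.sum_congr rfl fun i _ => Finset.sum_congr rfl fun j _ => by ring

theorem integral_dotProduct_sq_of_isotropic [DecidableEq ι]
    (hx : ∀ i, MemLp (fun ω => x ω i) 2 μ)
    (hmom : ∀ i j, ∫ ω, x ω i * x ω j ∂μ = (1 : Matrix ι ι ℝ) i j) (v : ι → ℝ) :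
    ∫ ω, (x ω ⬝ᵥ v) ^ 2 ∂μ = ∑ i, v i ^ 2 := by
  have hmom' : Matrix.of (fun i j => ∫ ω, x ω i * x ω j ∂μ) = 1 := Matrix.ext hmom
  rw [integral_dotProduct_sq hx, hmom', one_mulVec]
  simp only [dotProduct, sq]

end SecondMoment

section Interpolant

variable {R m n : Type*} [CommRing R] [Fintype m] [Fintype n]

theorem mulVec_dotProduct_eq_dotProduct_transpose_mulVec (A : Matrix m n R) (x : n → R)
    (y : m → R) : (A *ᵥ x) ⬝ᵥ y = x ⬝ᵥ (Aᵀ *ᵥ y) := by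
  rw [← vecMul_transpose, ← dotProduct_mulVec]

variable [DecidableEq m]

theorem isSymm_inv_mul_transpose_self (X : Matrix m n R) : (X * Xᵀ)⁻¹.IsSymm :=
  IsSymm.inv <| by rw [IsSymm, transpose_mul, transpose_transpose]

theorem isSymm_transpose_mul_inv_mul_transpose_mul (X : Matrix m n R) :
    (Xᵀ * (X * Xᵀ)⁻¹ * X).IsSymm := by
  rw [IsSymm, transpose_mul, transpose_mul, transpose_transpose,
    (isSymm_inv_mul_transpose_self X).eq, Matrix.mul_assoc]

theorem dotProduct_mulVec_inv_mul_transpose (X : Matrix m n R) (x β : n → R) :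
    ((X * Xᵀ)⁻¹ *ᵥ (X *ᵥ x)) ⬝ᵥ (X *ᵥ β) = x ⬝ᵥ ((Xᵀ * (X * Xᵀ)⁻¹ * X) *ᵥ β) := by
  rw [mulVec_mulVec, mulVec_dotProduct_eq_dotProduct_transpose_mulVec, mulVec_mulVec,
    transpose_mul, (isSymm_inv_mul_transpose_self X).eq, Matrix.mul_assoc]

variable [DecidableEq n]

theorem minNorm_residual_eq (X : Matrix m n R) (x β : n → R) :
    x ⬝ᵥ β - ((X * Xᵀ)⁻¹ *ᵥ (X *ᵥ x)) ⬝ᵥ (X *ᵥ β) =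
      x ⬝ᵥ ((1 - Xᵀ * (X * Xᵀ)⁻¹ * X) *ᵥ β) := by
  rw [dotProduct_mulVec_inv_mul_transpose, sub_mulVec, dotProduct_sub, one_mulVec]

theorem gradientDescent_residual_eq (X : Matrix m n R) (F : Matrix n m R) (x β : n → R) :
    x ⬝ᵥ β - ((X * Xᵀ)⁻¹ *ᵥ (X *ᵥ x) + (Fᵀ * (1 - Xᵀ * (X * Xᵀ)⁻¹ * X)) *ᵥ x) ⬝ᵥ (X *ᵥ β) =
      x ⬝ᵥ ((1 - Xᵀ * (X * Xᵀ)⁻¹ * X) *ᵥ (β - F *ᵥ (X *ᵥ β))) := by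
  have hP := (isSymm_one.sub (isSymm_transpose_mul_inv_mul_transpose_mul X)).eq
  rw [add_dotProduct, ← sub_sub, minNorm_residual_eq,
    mulVec_dotProduct_eq_dotProduct_transpose_mulVec, transpose_mul, transpose_transpose,
    hP, ← mulVec_mulVec, mulVec_sub, dotProduct_sub]

end Interpolant

theorem excess_bias_gradient_descent_interpolant_general
    {Ω : Type*} [MeasurableSpace Ω] (P' : Measure Ω)
    {n p : ℕ}
    (X : Matrix (Fin n) (Fin p) ℝ)
    (P : Matrix (Fin p) (Fin p) ℝ) (hP : P = Xᵀ * (X * Xᵀ)⁻¹ * X)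
    (β : Fin p → ℝ)
    (F : Matrix (Fin p) (Fin n) ℝ)
    (z : Fin p → ℝ) (hz : z = β - F *ᵥ (X *ᵥ β))
    (xstar : Ω → Fin p → ℝ)
    (hxL2 : ∀ i, MemLp (fun ω => xstar ω i) 2 P')
    (hxmom : ∀ i j, ∫ ω, xstar ω i * xstar ω j ∂P' =
      (1 : Matrix (Fin p) (Fin p) ℝ) i j)
    (h hinf : (Fin p → ℝ) → Fin n → ℝ)
    (hh : ∀ x, h x = (X * Xᵀ)⁻¹ *ᵥ (X *ᵥ x))
    (hhinf : ∀ x, hinf x = h x + (Fᵀ * (1 - P)) *ᵥ x) :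
    (∫ ω, (xstar ω ⬝ᵥ β - hinf (xstar ω) ⬝ᵥ (X *ᵥ β)) ^ 2 ∂P' =
        (∫ ω, (xstar ω ⬝ᵥ β - h (xstar ω) ⬝ᵥ (X *ᵥ β)) ^ 2 ∂P') -
          (∑ i, (((1 - P) *ᵥ β) i) ^ 2) + ∑ i, (((1 - P) *ᵥ z) i) ^ 2) ∧
      (∫ ω, (xstar ω ⬝ᵥ β - h (xstar ω) ⬝ᵥ (X *ᵥ β)) ^ 2 ∂P' =
        ∑ i, (((1 - P) *ᵥ β) i) ^ 2) ∧
      (∫ ω, (xstar ω ⬝ᵥ β - hinf (xstar ω) ⬝ᵥ (X *ᵥ β)) ^ 2 ∂P' =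
        ∑ i, (((1 - P) *ᵥ z) i) ^ 2) := by
  have hmin : ∫ ω, (xstar ω ⬝ᵥ β - h (xstar ω) ⬝ᵥ (X *ᵥ β)) ^ 2 ∂P' =
      ∑ i, (((1 - P) *ᵥ β) i) ^ 2 := by
    simp only [hh, hP, minNorm_residual_eq, integral_dotProduct_sq_of_isotropic hxL2 hxmom]
  have hgd : ∫ ω, (xstar ω ⬝ᵥ β - hinf (xstar ω) ⬝ᵥ (X *ᵥ β)) ^ 2 ∂P' =
      ∑ i, (((1 - P) *ᵥ z) i) ^ 2 := by
    simp only [hhinf, hh, hP, hz, gradientDescent_residual_eq,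
      integral_dotProduct_sq_of_isotropic hxL2 hxmom]
  exact ⟨by rw [hmin, hgd, sub_self, zero_add], hmin, hgd⟩

/-- Excess bias of the gradient-descent interpolant with initialization
`β^{(0)} = Fy` versus that of the minimum-norm least squares model, for a linear true
mean `μ(x) = xᵀβ` and isotropic test features (`E x* = 0`, `E x*x*ᵀ = I_p`):
`E[(x*ᵀβ − h^{(∞)}(x*)ᵀXβ)²] = E[(x*ᵀβ − h(x*)ᵀXβ)²] − ‖(I−P)β‖² + ‖(I−P)z‖²`,
with `E[(x*ᵀβ − h(x*)ᵀXβ)²] = ‖(I−P)β‖²` and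
`E[(x*ᵀβ − h^{(∞)}(x*)ᵀXβ)²] = ‖(I−P)z‖²`, where `z = β − FXβ`. -/
theorem excess_bias_gradient_descent_interpolant
    {Ω : Type*} [MeasurableSpace Ω] (P' : Measure Ω) [IsProbabilityMeasure P']
    {n p : ℕ} (hnp : n < p)
    (X : Matrix (Fin n) (Fin p) ℝ) (hX : X.rank = n)
    (P : Matrix (Fin p) (Fin p) ℝ) (hP : P = Xᵀ * (X * Xᵀ)⁻¹ * X)
    (β : Fin p → ℝ)
    (F : Matrix (Fin p) (Fin n) ℝ)
    (z : Fin p → ℝ) (hz : z = β - F *ᵥ (X *ᵥ β))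
    (xstar : Ω → Fin p → ℝ) (hxmeas : Measurable xstar)
    (hxL2 : ∀ i, MemLp (fun ω => xstar ω i) 2 P')
    (hxmean : ∀ i, ∫ ω, xstar ω i ∂P' = 0)
    (hxmom : ∀ i j, ∫ ω, xstar ω i * xstar ω j ∂P' =
      (1 : Matrix (Fin p) (Fin p) ℝ) i j)
    (h hinf : (Fin p → ℝ) → Fin n → ℝ)
    (hh : ∀ x, h x = (X * Xᵀ)⁻¹ *ᵥ (X *ᵥ x))
    (hhinf : ∀ x, hinf x = h x + (Fᵀ * (1 - P)) *ᵥ x) :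
    (∫ ω, (xstar ω ⬝ᵥ β - hinf (xstar ω) ⬝ᵥ (X *ᵥ β)) ^ 2 ∂P' =
        (∫ ω, (xstar ω ⬝ᵥ β - h (xstar ω) ⬝ᵥ (X *ᵥ β)) ^ 2 ∂P') -
          (∑ i, (((1 - P) *ᵥ β) i) ^ 2) + ∑ i, (((1 - P) *ᵥ z) i) ^ 2) ∧
      (∫ ω, (xstar ω ⬝ᵥ β - h (xstar ω) ⬝ᵥ (X *ᵥ β)) ^ 2 ∂P' =
        ∑ i, (((1 - P) *ᵥ β) i) ^ 2) ∧
      (∫ ω, (xstar ω ⬝ᵥ β - hinf (xstar ω) ⬝ᵥ (X *ᵥ β)) ^ 2 ∂P' =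
        ∑ i, (((1 - P) *ᵥ z) i) ^ 2) :=
  excess_bias_gradient_descent_interpolant_general P' X P hP β F z hz xstar hxL2 hxmom h hinf hh
    hhinf
end
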